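/- arXiv:1402.5096 — 3 statements merged into one kernel-verified Lean document; each statement's English description precedes it below -/
import Mathlib

section
/- Let Q be a prime quiver with χ(Q) ≥ 2 such that the pair (Q,0) (with the zero weight) is tight. Then |Q0| ≤ χ(Q) − 1, and consequently |Q1| = |Q0| + χ(Q) − 1 ≤ 2(χ(Q) − 1). -/
set_option linter.unusedSectionVars false

/-- The flow map of a quiver with arrow set `A`, vertex set `V`, source map `s`
and target map `t`. -/
def flowMap {V A : Type} [Fintype A] [DecidableEq V] (s t : A → V) (x : A → ℝ) (v : V) : ℝ :=
  (∑ a : A, if t a = v then x a else 0) - (∑ a : A, if s a = v then x a else 0)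

/-- The quiver polyhedron `∇(Q,θ)`. -/
def quiverPolyhedron {V A : Type} [Fintype A] [DecidableEq V] (s t : A → V) (θ : V → ℤ) :
    Set (A → ℝ) :=
  {x | (∀ a, 0 ≤ x a) ∧ ∀ v, flowMap s t x v = (θ v : ℝ)}

/-- A point of `ℝ^A` is a lattice point if all its coordinates are integers. -/
def IsLatticePt {A : Type} (x : A → ℝ) : Prop := ∀ a, ∃ z : ℤ, x a = (z : ℝ)

/-- Integral-affine equivalence of lattice polyhedra. -/
def IntegralAffinelyEquivalent {A B : Type}
    (P : Set (A → ℝ)) (Q : Set (B → ℝ)) : Prop :=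
  ∃ (φ : (A → ℝ) →ᵃ[ℝ] (B → ℝ)) (ψ : (B → ℝ) →ᵃ[ℝ] (A → ℝ)),
    (∀ x ∈ affineSpan ℝ P, ψ (φ x) = x) ∧
    (∀ y ∈ affineSpan ℝ Q, φ (ψ y) = y) ∧
    φ '' (affineSpan ℝ P : Set (A → ℝ)) = (affineSpan ℝ Q : Set (B → ℝ)) ∧
    φ '' ((affineSpan ℝ P : Set (A → ℝ)) ∩ {x | IsLatticePt x}) =
      (affineSpan ℝ Q : Set (B → ℝ)) ∩ {y | IsLatticePt y} ∧
    φ '' P = Q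

/-- The quiver has an oriented cycle. -/
def HasOrientedCycle {V A : Type} (s t : A → V) : Prop :=
  ∃ (n : ℕ) (f : Fin (n + 1) → A), ∀ i : Fin (n + 1), t (f i) = s (f (i + 1))

/-- The arrow `a` is removable for `(Q,θ)`. -/
def Removable {V A : Type} [Fintype A] [DecidableEq V] [DecidableEq A]
    (s t : A → V) (θ : V → ℤ) (a : A) : Prop :=
  IntegralAffinelyEquivalent (quiverPolyhedron s t θ)
    (quiverPolyhedron (fun b : {b : A // b ≠ a} => s b.1) (fun b => t b.1) θ)

/-- The non-loop arrow `a` is contractable for `(Q,θ)`. -/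
def Contractable {V A : Type} [Fintype A] [DecidableEq V] [DecidableEq A]
    (s t : A → V) (θ : V → ℤ) (a : A) (h : s a ≠ t a) : Prop :=
  IntegralAffinelyEquivalent (quiverPolyhedron s t θ)
    (quiverPolyhedron
      (fun b : {b : A // b ≠ a} =>
        if hb : s b.1 = s a then (⟨t a, Ne.symm h⟩ : {v : V // v ≠ s a}) else ⟨s b.1, hb⟩)
      (fun b : {b : A // b ≠ a} =>
        if hb : t b.1 = s a then (⟨t a, Ne.symm h⟩ : {v : V // v ≠ s a}) else ⟨t b.1, hb⟩)
      (fun v : {v : V // v ≠ s a} => if v.1 = t a then θ (s a) + θ (t a) else θ v.1))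

/-- The pair `(Q,θ)` is tight. -/
def Tight {V A : Type} [Fintype A] [DecidableEq V] [DecidableEq A]
    (s t : A → V) (θ : V → ℤ) : Prop :=
  (quiverPolyhedron s t θ).Nonempty ∧
  (∀ a : A, ¬ Removable s t θ a) ∧
  ∀ (a : A) (h : s a ≠ t a), ¬ Contractable s t θ a h

section Infra
variable {A : Type} [Fintype A] [DecidableEq A]

lemma sum_split (a : A) (g : A → ℝ) :
    (∑ b : A, g b) = g a + ∑ b : {b : A // b ≠ a}, g b.1 := by
  have h1 : ∑ b ∈ Finset.univ.erase a, g b = ∑ b : {b : A // b ≠ a}, g b.1 :=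
    Finset.sum_subtype _ (by intro b; simp) g
  have h2 := Finset.sum_erase_add Finset.univ g (Finset.mem_univ a)
  linarith

noncomputable def extC (a : A) (c : {b : A // b ≠ a} → ℝ) :
    ({b : A // b ≠ a} → ℝ) →ᵃ[ℝ] (A → ℝ) :=
  LinearMap.toAffineMap
  { toFun := fun y b => if hb : b = a then (∑ b', c b' * y b') else y ⟨b, hb⟩
    map_add' := by
      intro y z; funext b
      by_cases hb : b = a
      · simp [hb, mul_add, Finset.sum_add_distrib]
      · simp [hb]
    map_smul' := by
      intro r y; funext b
      by_cases hb : b = a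
      · simp [hb, Finset.mul_sum]
        apply Finset.sum_congr rfl
        intro b' _
        ring
      · simp [hb] }

noncomputable def restr (a : A) : (A → ℝ) →ᵃ[ℝ] ({b : A // b ≠ a} → ℝ) :=
  (LinearMap.funLeft ℝ ℝ (fun b : {b : A // b ≠ a} => b.1)).toAffineMap

@[simp] lemma restr_apply (a : A) (x : A → ℝ) (b : {b : A // b ≠ a}) :
    restr a x b = x b.1 := rfl

@[simp] lemma extC_apply_ne (a : A) (c : {b : A // b ≠ a} → ℝ) (y : {b : A // b ≠ a} → ℝ)
    (b : {b : A // b ≠ a}) : extC a c y b.1 = y b := by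
  show (if hb : b.1 = a then _ else y ⟨b.1, hb⟩) = y b
  rw [dif_neg b.2]

@[simp] lemma extC_apply_self (a : A) (c : {b : A // b ≠ a} → ℝ) (y : {b : A // b ≠ a} → ℝ) :
    extC a c y a = ∑ b', c b' * y b' := by
  show (if hb : a = a then _ else y ⟨a, hb⟩) = _
  rw [dif_pos rfl]

lemma lattice_sum {ι : Type} [Fintype ι] (y : ι → ℝ) (hy : ∀ i, ∃ z : ℤ, y i = z)
    (p : ι → Prop) [DecidablePred p] : ∃ z : ℤ, (∑ i, if p i then y i else 0) = z := by
  choose zf hzf using hy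
  refine ⟨∑ i, if p i then zf i else 0, ?_⟩
  push_cast
  exact Finset.sum_congr rfl fun i _ => by by_cases h : p i <;> simp [h, hzf]

end Infra

lemma equiv_of_maps {A B : Type} (P : Set (A → ℝ)) (Q : Set (B → ℝ))
    (φ : (A → ℝ) →ᵃ[ℝ] (B → ℝ)) (ψ : (B → ℝ) →ᵃ[ℝ] (A → ℝ))
    (hψφ : ∀ x ∈ P, ψ (φ x) = x)
    (hφψ : ∀ y, φ (ψ y) = y)
    (hφP : φ '' P = Q)
    (hψQ : ψ '' Q = P)
    (hφL : ∀ x, IsLatticePt x → IsLatticePt (φ x))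
    (hψL : ∀ y, IsLatticePt y → IsLatticePt (ψ y)) :
    IntegralAffinelyEquivalent P Q := by
  have hfix : ∀ x ∈ affineSpan ℝ P, ψ (φ x) = x := by
    set f : (A → ℝ) →ᵃ[ℝ] (A → ℝ) := ψ.comp φ with hf
    have hfP : ∀ x ∈ P, f x = x := hψφ
    let S : AffineSubspace ℝ (A → ℝ) :=
    { carrier := {x | f x = x}
      smul_vsub_vadd_mem' := by
        intro c p1 p2 p3 h1 h2 h3
        simp only [Set.mem_setOf_eq] at *
        rw [f.map_vadd, f.linear.map_smul, f.linearMap_vsub, h1, h2, h3] }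
    intro x hx
    have hle : affineSpan ℝ P ≤ S :=
      affineSpan_le.mpr (fun y hy => show f y = y from hfP y hy)
    exact hle hx
  have hspanφ : φ '' (affineSpan ℝ P : Set (A → ℝ)) = (affineSpan ℝ Q : Set (B → ℝ)) := by
    have h1 : (affineSpan ℝ P).map φ = affineSpan ℝ Q := by
      rw [AffineSubspace.map_span, hφP]
    rw [← h1, AffineSubspace.coe_map]
  have hspanψ : ψ '' (affineSpan ℝ Q : Set (B → ℝ)) = (affineSpan ℝ P : Set (A → ℝ)) := by
    have h1 : (affineSpan ℝ Q).map ψ = affineSpan ℝ P := by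
      rw [AffineSubspace.map_span, hψQ]
    rw [← h1, AffineSubspace.coe_map]
  refine ⟨φ, ψ, hfix, fun y _ => hφψ y, hspanφ, ?_, hφP⟩
  ext y
  constructor
  · rintro ⟨x, ⟨hx1, hx2⟩, rfl⟩
    exact ⟨hspanφ ▸ Set.mem_image_of_mem φ hx1, hφL x hx2⟩
  · rintro ⟨hy1, hy2⟩
    refine ⟨ψ y, ⟨hspanψ ▸ Set.mem_image_of_mem ψ hy1, hψL y hy2⟩, hφψ y⟩

lemma removable_of_forced_zero {V A : Type} [Fintype A] [DecidableEq V] [DecidableEq A]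
    (s t : A → V) (θ : V → ℤ) (a : A)
    (hz : ∀ x ∈ quiverPolyhedron s t θ, x a = 0) :
    Removable s t θ a := by
  classical
  set P := quiverPolyhedron s t θ with hP
  set P' := quiverPolyhedron (fun b : {b : A // b ≠ a} => s b.1) (fun b => t b.1) θ with hP'
  set φ : (A → ℝ) →ᵃ[ℝ] ({b : A // b ≠ a} → ℝ) := restr a with hφ
  set ψ : ({b : A // b ≠ a} → ℝ) →ᵃ[ℝ] (A → ℝ) := extC a 0 with hψ
  have hψa : ∀ y, ψ y a = 0 := by intro y; simp [hψ]
  have hψb : ∀ y (b : {b : A // b ≠ a}), ψ y b.1 = y b := by intro y b; simp [hψ]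
  -- the key flow identity
  have key : ∀ (x : A → ℝ), x a = 0 → ∀ v,
      flowMap (fun b : {b : A // b ≠ a} => s b.1) (fun b => t b.1) (fun b => x b.1) v
        = flowMap s t x v := by
    intro x hxa v
    unfold flowMap
    rw [sum_split a (fun b => if t b = v then x b else 0),
        sum_split a (fun b => if s b = v then x b else 0)]
    simp [hxa]
  have hmem1 : ∀ x ∈ P, φ x ∈ P' := by
    intro x hx
    refine ⟨fun b => hx.1 b.1, fun v => ?_⟩
    have h0 : φ x = fun b => x b.1 := rfl
    rw [h0, key x (hz x hx) v]
    exact hx.2 v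
  have hmem2 : ∀ y ∈ P', ψ y ∈ P := by
    intro y hy
    constructor
    · intro b
      by_cases hb : b = a
      · rw [hb, hψa]
      · have := hy.1 ⟨b, hb⟩
        rwa [← hψb y ⟨b, hb⟩] at this
    · intro v
      have h1 : (fun b : {b : A // b ≠ a} => ψ y b.1) = y := funext fun b => hψb y b
      have h2 := key (ψ y) (hψa y) v
      rw [h1] at h2
      rw [← h2]
      exact hy.2 v
  have hψφ : ∀ x ∈ P, ψ (φ x) = x := by
    intro x hx
    funext b
    by_cases hb : b = a
    · rw [hb, hψa, hz x hx]
    · exact hψb (φ x) ⟨b, hb⟩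
  have hφψ : ∀ y, φ (ψ y) = y := by
    intro y; funext b; exact hψb y b
  apply equiv_of_maps P P' φ ψ hψφ hφψ
  · ext y
    exact ⟨fun ⟨x, hx, hxy⟩ => hxy ▸ hmem1 x hx, fun hy => ⟨ψ y, hmem2 y hy, hφψ y⟩⟩
  · ext x
    constructor
    · rintro ⟨y, hy, rfl⟩; exact hmem2 y hy
    · intro hx; exact ⟨φ x, hmem1 x hx, hψφ x hx⟩
  · intro x hx b; exact hx b.1
  · intro y hy b
    by_cases hb : b = a
    · exact ⟨0, by rw [hb, hψa]; simp⟩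
    · have := hy ⟨b, hb⟩
      rwa [← hψb y ⟨b, hb⟩] at this

lemma contractable_indeg {V A : Type} [Fintype A] [DecidableEq V] [DecidableEq A]
    (s t : A → V) (a : A) (h : s a ≠ t a)
    (hin : ∀ b, t b = t a → b = a) :
    Contractable s t (fun _ => 0) a h := by
  classical
  set A' := {b : A // b ≠ a} with hA'
  set V' := {v : V // v ≠ s a} with hV'
  set sh : A' → V' := fun b =>
    if hb : s b.1 = s a then (⟨t a, Ne.symm h⟩ : V') else ⟨s b.1, hb⟩ with hsh
  set th : A' → V' := fun b =>
    if hb : t b.1 = s a then (⟨t a, Ne.symm h⟩ : V') else ⟨t b.1, hb⟩ with hth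
  set θh : V' → ℤ := fun v => if v.1 = t a then (0:ℤ) + 0 else 0 with hθh
  set c : A' → ℝ := fun b => if s b.1 = t a then 1 else 0 with hc
  set P := quiverPolyhedron s t (fun _ => (0:ℤ)) with hP
  set P' := quiverPolyhedron sh th θh with hP'
  set φ : (A → ℝ) →ᵃ[ℝ] (A' → ℝ) := restr a with hφ
  set ψ : (A' → ℝ) →ᵃ[ℝ] (A → ℝ) := extC a c with hψdef
  have hψne : ∀ (y : A' → ℝ) (b : A'), ψ y b.1 = y b := fun y b => extC_apply_ne a c y b
  have hψa : ∀ y : A' → ℝ, ψ y a = ∑ b : A', if s b.1 = t a then y b else 0 := by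
    intro y
    rw [hψdef]
    rw [extC_apply_self]
    exact Finset.sum_congr rfl fun b _ => by by_cases hb : s b.1 = t a <;> simp [hc, hb]
  have hθ0 : ∀ v' : V', ((θh v' : ℤ) : ℝ) = 0 := by
    intro v'; simp [hθh]
  -- sums of ψ y split
  have hsx : ∀ (y : A' → ℝ) (f : A → V) (v : V),
      (∑ b : A, if f b = v then ψ y b else 0)
        = (if f a = v then ψ y a else 0) + ∑ b : A', if f b.1 = v then y b else 0 := by
    intro y f v
    rw [sum_split a (fun b => if f b = v then ψ y b else 0)]
    congr 1
    exact Finset.sum_congr rfl fun b _ => by rw [hψne y b]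
  -- condition conversion
  have hcond : ∀ (u : V) (v' : V'),
      ((if hu : u = s a then (⟨t a, Ne.symm h⟩ : V') else ⟨u, hu⟩) = v')
        ↔ ((if u = s a then t a else u) = v'.1) := by
    intro u v'
    by_cases hu : u = s a <;> simp [hu, Subtype.ext_iff]
  have hflow' : ∀ (y : A' → ℝ) (v' : V'),
      flowMap sh th y v'
        = (∑ b : A', if (if t b.1 = s a then t a else t b.1) = v'.1 then y b else 0)
          - (∑ b : A', if (if s b.1 = s a then t a else s b.1) = v'.1 then y b else 0) := by
    intro y v'
    unfold flowMap
    congr 1 <;>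
      exact Finset.sum_congr rfl fun b _ => if_congr (hcond _ _) rfl rfl
  have hpt1 : ∀ (u : V) (r : ℝ) (z : V), z ≠ t a → z ≠ s a →
      (if (if u = s a then t a else u) = z then r else 0) = (if u = z then r else 0) := by
    intro u r z h1 h2
    by_cases hu : u = s a
    · rw [if_pos hu, if_neg (fun q => h1 q.symm), if_neg (fun q => h2 (hu ▸ q).symm)]
    · rw [if_neg hu]
  have hpt2 : ∀ (u : V) (r : ℝ),
      (if (if u = s a then t a else u) = t a then r else 0)
        = (if u = s a then r else 0) + (if u = t a then r else 0) := by
    intro u r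
    by_cases hu : u = s a
    · have hut : ¬ (u = t a) := fun q => h (hu ▸ q)
      simp [hu, hut, h]
    · simp [hu]
  -- sum over A' of incoming-to-(t a) is zero
  have hzero_in : ∀ y : A' → ℝ, (∑ b : A', if t b.1 = t a then y b else 0) = 0 :=
    fun y => Finset.sum_eq_zero fun b _ => if_neg fun q => b.2 (hin b.1 q)
  -- flow of ψ y at t a is always 0
  have hflow_ta : ∀ y : A' → ℝ, flowMap s t (ψ y) (t a) = 0 := by
    intro y
    unfold flowMap
    rw [hsx y t (t a), hsx y s (t a), if_pos rfl, if_neg h, hzero_in, hψa y]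
    ring
  -- flow matching away from s a and t a
  have hflow_other : ∀ (y : A' → ℝ) (v' : V'), v'.1 ≠ t a →
      flowMap sh th y v' = flowMap s t (ψ y) v'.1 := by
    intro y v' hvt
    have e1 : (∑ b : A', if (if t b.1 = s a then t a else t b.1) = v'.1 then y b else 0)
        = ∑ b : A', if t b.1 = v'.1 then y b else 0 :=
      Finset.sum_congr rfl fun b _ => hpt1 (t b.1) (y b) v'.1 hvt v'.2
    have e2 : (∑ b : A', if (if s b.1 = s a then t a else s b.1) = v'.1 then y b else 0)
        = ∑ b : A', if s b.1 = v'.1 then y b else 0 :=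
      Finset.sum_congr rfl fun b _ => hpt1 (s b.1) (y b) v'.1 hvt v'.2
    rw [hflow' y v', e1, e2]
    unfold flowMap
    rw [hsx y t v'.1, hsx y s v'.1, if_neg (fun q => hvt q.symm), if_neg (fun q => v'.2 q.symm)]
    ring
  -- flow matching at the merged vertex
  have hflow_w : ∀ y : A' → ℝ,
      flowMap sh th y ⟨t a, Ne.symm h⟩ = flowMap s t (ψ y) (s a) := by
    intro y
    rw [hflow' y ⟨t a, Ne.symm h⟩]
    have hv1 : ((⟨t a, Ne.symm h⟩ : V')).1 = t a := rfl
    rw [hv1]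
    have e1 : (∑ b : A', if (if t b.1 = s a then t a else t b.1) = t a then y b else 0)
        = (∑ b : A', if t b.1 = s a then y b else 0)
          + ∑ b : A', if t b.1 = t a then y b else 0 := by
      rw [← Finset.sum_add_distrib]
      exact Finset.sum_congr rfl fun b _ => hpt2 (t b.1) (y b)
    have e2 : (∑ b : A', if (if s b.1 = s a then t a else s b.1) = t a then y b else 0)
        = (∑ b : A', if s b.1 = s a then y b else 0)
          + ∑ b : A', if s b.1 = t a then y b else 0 := by
      rw [← Finset.sum_add_distrib]
      exact Finset.sum_congr rfl fun b _ => hpt2 (s b.1) (y b)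
    rw [e1, e2, hzero_in]
    unfold flowMap
    rw [hsx y t (s a), hsx y s (s a), if_neg (fun q => h q.symm), if_pos rfl, hψa y]
    ring
  -- the forced identity on P
  have hforced : ∀ x ∈ P, ψ (φ x) = x := by
    intro x hx
    funext b
    by_cases hb : b = a
    · rw [hb, hψa (φ x)]
      have hfl := hx.2 (t a)
      unfold flowMap at hfl
      rw [sum_split a (fun b' => if t b' = t a then x b' else 0),
          sum_split a (fun b' => if s b' = t a then x b' else 0),
          if_pos rfl, if_neg h] at hfl
      have hz : (∑ b' : A', if t b'.1 = t a then x b'.1 else 0) = 0 :=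
        Finset.sum_eq_zero fun b' _ => if_neg fun q => b'.2 (hin b'.1 q)
      rw [hz] at hfl
      push_cast at hfl
      have heq : (∑ b' : A', if s b'.1 = t a then (φ x) b' else 0)
          = ∑ b' : A', if s b'.1 = t a then x b'.1 else 0 :=
        Finset.sum_congr rfl fun b' _ => by rw [restr_apply]
      rw [heq]
      linarith
    · exact hψne (φ x) ⟨b, hb⟩
  have hφψ : ∀ y, φ (ψ y) = y := fun y => funext fun b => hψne y b
  have hmem1 : ∀ x ∈ P, φ x ∈ P' := by
    intro x hx
    refine ⟨fun b => hx.1 b.1, fun v' => ?_⟩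
    rw [hθ0 v']
    obtain ⟨v, hv⟩ := v'
    by_cases hvt : v = t a
    · have hvv : (⟨v, hv⟩ : V') = ⟨t a, Ne.symm h⟩ := Subtype.ext hvt
      rw [hvv, hflow_w (φ x), hforced x hx]
      have := hx.2 (s a)
      push_cast at this
      exact this
    · rw [hflow_other (φ x) ⟨v, hv⟩ hvt, hforced x hx]
      have := hx.2 v
      push_cast at this
      exact this
  have hmem2 : ∀ y ∈ P', ψ y ∈ P := by
    intro y hy
    constructor
    · intro b
      by_cases hb : b = a
      · subst hb
        rw [hψa y]
        exact Finset.sum_nonneg fun b' _ => by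
          by_cases hb' : s b'.1 = t b <;> simp [hb', hy.1 b']
      · have := hy.1 ⟨b, hb⟩
        rwa [← hψne y ⟨b, hb⟩] at this
    · intro v
      push_cast
      by_cases hvt : v = t a
      · rw [hvt]; exact hflow_ta y
      · by_cases hvs : v = s a
        · rw [hvs, ← hflow_w y]
          have := hy.2 ⟨t a, Ne.symm h⟩
          rw [hθ0] at this
          exact this
        · rw [← hflow_other y ⟨v, hvs⟩ hvt]
          have := hy.2 ⟨v, hvs⟩
          rw [hθ0] at this
          exact this
  apply equiv_of_maps P P' φ ψ hforced hφψ
  · ext y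
    exact ⟨fun ⟨x, hx, hxy⟩ => hxy ▸ hmem1 x hx, fun hy => ⟨ψ y, hmem2 y hy, hφψ y⟩⟩
  · ext x
    constructor
    · rintro ⟨y, hy, rfl⟩; exact hmem2 y hy
    · intro hx; exact ⟨φ x, hmem1 x hx, hforced x hx⟩
  · intro x hx b; exact hx b.1
  · intro y hy b
    by_cases hb : b = a
    · subst hb
      rw [hψa y]
      exact lattice_sum y hy _
    · have := hy ⟨b, hb⟩
      rwa [← hψne y ⟨b, hb⟩] at this

lemma contractable_outdeg {V A : Type} [Fintype A] [DecidableEq V] [DecidableEq A]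
    (s t : A → V) (a : A) (h : s a ≠ t a)
    (hout : ∀ b, s b = s a → b = a) :
    Contractable s t (fun _ => 0) a h := by
  classical
  set A' := {b : A // b ≠ a} with hA'
  set V' := {v : V // v ≠ s a} with hV'
  set sh : A' → V' := fun b =>
    if hb : s b.1 = s a then (⟨t a, Ne.symm h⟩ : V') else ⟨s b.1, hb⟩ with hsh
  set th : A' → V' := fun b =>
    if hb : t b.1 = s a then (⟨t a, Ne.symm h⟩ : V') else ⟨t b.1, hb⟩ with hth
  set θh : V' → ℤ := fun v => if v.1 = t a then (0:ℤ) + 0 else 0 with hθh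
  set c : A' → ℝ := fun b => if t b.1 = s a then 1 else 0 with hc
  set P := quiverPolyhedron s t (fun _ => (0:ℤ)) with hP
  set P' := quiverPolyhedron sh th θh with hP'
  set φ : (A → ℝ) →ᵃ[ℝ] (A' → ℝ) := restr a with hφ
  set ψ : (A' → ℝ) →ᵃ[ℝ] (A → ℝ) := extC a c with hψdef
  have hψne : ∀ (y : A' → ℝ) (b : A'), ψ y b.1 = y b := fun y b => extC_apply_ne a c y b
  have hψa : ∀ y : A' → ℝ, ψ y a = ∑ b : A', if t b.1 = s a then y b else 0 := by
    intro y
    rw [hψdef]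
    rw [extC_apply_self]
    exact Finset.sum_congr rfl fun b _ => by by_cases hb : t b.1 = s a <;> simp [hc, hb]
  have hθ0 : ∀ v' : V', ((θh v' : ℤ) : ℝ) = 0 := by
    intro v'; simp [hθh]
  -- sums of ψ y split
  have hsx : ∀ (y : A' → ℝ) (f : A → V) (v : V),
      (∑ b : A, if f b = v then ψ y b else 0)
        = (if f a = v then ψ y a else 0) + ∑ b : A', if f b.1 = v then y b else 0 := by
    intro y f v
    rw [sum_split a (fun b => if f b = v then ψ y b else 0)]
    congr 1
    exact Finset.sum_congr rfl fun b _ => by rw [hψne y b]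
  -- condition conversion
  have hcond : ∀ (u : V) (v' : V'),
      ((if hu : u = s a then (⟨t a, Ne.symm h⟩ : V') else ⟨u, hu⟩) = v')
        ↔ ((if u = s a then t a else u) = v'.1) := by
    intro u v'
    by_cases hu : u = s a <;> simp [hu, Subtype.ext_iff]
  have hflow' : ∀ (y : A' → ℝ) (v' : V'),
      flowMap sh th y v'
        = (∑ b : A', if (if t b.1 = s a then t a else t b.1) = v'.1 then y b else 0)
          - (∑ b : A', if (if s b.1 = s a then t a else s b.1) = v'.1 then y b else 0) := by
    intro y v'
    unfold flowMap
    congr 1 <;>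
      exact Finset.sum_congr rfl fun b _ => if_congr (hcond _ _) rfl rfl
  have hpt1 : ∀ (u : V) (r : ℝ) (z : V), z ≠ t a → z ≠ s a →
      (if (if u = s a then t a else u) = z then r else 0) = (if u = z then r else 0) := by
    intro u r z h1 h2
    by_cases hu : u = s a
    · rw [if_pos hu, if_neg (fun q => h1 q.symm), if_neg (fun q => h2 (hu ▸ q).symm)]
    · rw [if_neg hu]
  have hpt2 : ∀ (u : V) (r : ℝ),
      (if (if u = s a then t a else u) = t a then r else 0)
        = (if u = s a then r else 0) + (if u = t a then r else 0) := by
    intro u r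
    by_cases hu : u = s a
    · have hut : ¬ (u = t a) := fun q => h (hu ▸ q)
      simp [hu, hut, h]
    · simp [hu]
  -- sum over A' of outgoing-from-(s a) is zero
  have hzero_out : ∀ y : A' → ℝ, (∑ b : A', if s b.1 = s a then y b else 0) = 0 :=
    fun y => Finset.sum_eq_zero fun b _ => if_neg fun q => b.2 (hout b.1 q)
  -- flow of ψ y at s a is always 0
  have hflow_sa : ∀ y : A' → ℝ, flowMap s t (ψ y) (s a) = 0 := by
    intro y
    unfold flowMap
    rw [hsx y t (s a), hsx y s (s a), if_neg (fun q => h q.symm), if_pos rfl, hzero_out, hψa y]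
    ring
  -- flow matching away from s a and t a
  have hflow_other : ∀ (y : A' → ℝ) (v' : V'), v'.1 ≠ t a →
      flowMap sh th y v' = flowMap s t (ψ y) v'.1 := by
    intro y v' hvt
    have e1 : (∑ b : A', if (if t b.1 = s a then t a else t b.1) = v'.1 then y b else 0)
        = ∑ b : A', if t b.1 = v'.1 then y b else 0 :=
      Finset.sum_congr rfl fun b _ => hpt1 (t b.1) (y b) v'.1 hvt v'.2
    have e2 : (∑ b : A', if (if s b.1 = s a then t a else s b.1) = v'.1 then y b else 0)
        = ∑ b : A', if s b.1 = v'.1 then y b else 0 :=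
      Finset.sum_congr rfl fun b _ => hpt1 (s b.1) (y b) v'.1 hvt v'.2
    rw [hflow' y v', e1, e2]
    unfold flowMap
    rw [hsx y t v'.1, hsx y s v'.1, if_neg (fun q => hvt q.symm), if_neg (fun q => v'.2 q.symm)]
    ring
  -- flow matching at the merged vertex
  have hflow_w : ∀ y : A' → ℝ,
      flowMap sh th y ⟨t a, Ne.symm h⟩ = flowMap s t (ψ y) (t a) := by
    intro y
    rw [hflow' y ⟨t a, Ne.symm h⟩]
    have hv1 : ((⟨t a, Ne.symm h⟩ : V')).1 = t a := rfl
    rw [hv1]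
    have e1 : (∑ b : A', if (if t b.1 = s a then t a else t b.1) = t a then y b else 0)
        = (∑ b : A', if t b.1 = s a then y b else 0)
          + ∑ b : A', if t b.1 = t a then y b else 0 := by
      rw [← Finset.sum_add_distrib]
      exact Finset.sum_congr rfl fun b _ => hpt2 (t b.1) (y b)
    have e2 : (∑ b : A', if (if s b.1 = s a then t a else s b.1) = t a then y b else 0)
        = (∑ b : A', if s b.1 = s a then y b else 0)
          + ∑ b : A', if s b.1 = t a then y b else 0 := by
      rw [← Finset.sum_add_distrib]
      exact Finset.sum_congr rfl fun b _ => hpt2 (s b.1) (y b)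
    rw [e1, e2, hzero_out]
    unfold flowMap
    rw [hsx y t (t a), hsx y s (t a), if_pos rfl, if_neg h, hψa y]
    try ring
  -- the forced identity on P
  have hforced : ∀ x ∈ P, ψ (φ x) = x := by
    intro x hx
    funext b
    by_cases hb : b = a
    · rw [hb, hψa (φ x)]
      have hfl := hx.2 (s a)
      unfold flowMap at hfl
      rw [sum_split a (fun b' => if t b' = s a then x b' else 0),
          sum_split a (fun b' => if s b' = s a then x b' else 0),
          if_neg (fun q => h q.symm), if_pos rfl] at hfl
      have hz : (∑ b' : A', if s b'.1 = s a then x b'.1 else 0) = 0 :=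
        Finset.sum_eq_zero fun b' _ => if_neg fun q => b'.2 (hout b'.1 q)
      rw [hz] at hfl
      push_cast at hfl
      have heq : (∑ b' : A', if t b'.1 = s a then (φ x) b' else 0)
          = ∑ b' : A', if t b'.1 = s a then x b'.1 else 0 :=
        Finset.sum_congr rfl fun b' _ => by rw [restr_apply]
      rw [heq]
      linarith
    · exact hψne (φ x) ⟨b, hb⟩
  have hφψ : ∀ y, φ (ψ y) = y := fun y => funext fun b => hψne y b
  have hmem1 : ∀ x ∈ P, φ x ∈ P' := by
    intro x hx
    refine ⟨fun b => hx.1 b.1, fun v' => ?_⟩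
    rw [hθ0 v']
    obtain ⟨v, hv⟩ := v'
    by_cases hvt : v = t a
    · have hvv : (⟨v, hv⟩ : V') = ⟨t a, Ne.symm h⟩ := Subtype.ext hvt
      rw [hvv, hflow_w (φ x), hforced x hx]
      have := hx.2 (t a)
      push_cast at this
      exact this
    · rw [hflow_other (φ x) ⟨v, hv⟩ hvt, hforced x hx]
      have := hx.2 v
      push_cast at this
      exact this
  have hmem2 : ∀ y ∈ P', ψ y ∈ P := by
    intro y hy
    constructor
    · intro b
      by_cases hb : b = a
      · subst hb
        rw [hψa y]
        exact Finset.sum_nonneg fun b' _ => by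
          by_cases hb' : t b'.1 = s b <;> simp [hb', hy.1 b']
      · have := hy.1 ⟨b, hb⟩
        rwa [← hψne y ⟨b, hb⟩] at this
    · intro v
      push_cast
      by_cases hvs : v = s a
      · rw [hvs]; exact hflow_sa y
      · by_cases hvt : v = t a
        · rw [hvt, ← hflow_w y]
          have := hy.2 ⟨t a, Ne.symm h⟩
          rw [hθ0] at this
          exact this
        · rw [← hflow_other y ⟨v, hvs⟩ hvt]
          have := hy.2 ⟨v, hvs⟩
          rw [hθ0] at this
          exact this
  apply equiv_of_maps P P' φ ψ hforced hφψ
  · ext y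
    exact ⟨fun ⟨x, hx, hxy⟩ => hxy ▸ hmem1 x hx, fun hy => ⟨ψ y, hmem2 y hy, hφψ y⟩⟩
  · ext x
    constructor
    · rintro ⟨y, hy, rfl⟩; exact hmem2 y hy
    · intro hx; exact ⟨φ x, hmem1 x hx, hforced x hx⟩
  · intro x hx b; exact hx b.1
  · intro y hy b
    by_cases hb : b = a
    · subst hb
      rw [hψa y]
      exact lattice_sum y hy _
    · have := hy ⟨b, hb⟩
      rwa [← hψne y ⟨b, hb⟩] at this
/-- The simple graph underlying an undirected multigraph with edge-end map `ends`. -/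
def mgraphAdj {V E : Type} (ends : E → Sym2 V) : SimpleGraph V :=
  SimpleGraph.fromRel (fun v w => ∃ e : E, ends e = s(v, w))

/-- All endpoints of the edge `e` lie in `S`. -/
def EdgeWithin {V E : Type} (ends : E → Sym2 V) (S : Set V) (e : E) : Prop :=
  ∀ x ∈ ends e, x ∈ S

/-- A connected undirected multigraph with at least one edge is prime if it is not the
union of two full proper subgraphs having exactly one common vertex. -/
def MultigraphPrime {V E : Type} (ends : E → Sym2 V) : Prop :=
  (mgraphAdj ends).Connected ∧ Nonempty E ∧
    ¬ ∃ S T : Set V, S ∪ T = Set.univ ∧ S ≠ Set.univ ∧ T ≠ Set.univ ∧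
      (∃ v : V, S ∩ T = {v}) ∧ ∀ e : E, EdgeWithin ends S e ∨ EdgeWithin ends T e

/-- The underlying undirected multigraph of a quiver. -/
def quiverEnds {V A : Type} (s t : A → V) (a : A) : Sym2 V := s(s a, t a)

/-- A quiver is prime if its underlying graph is prime. -/
def QuiverPrime {V A : Type} (s t : A → V) : Prop := MultigraphPrime (quiverEnds s t)


lemma exists_nonloop_at {V A : Type} [Fintype V] (s t : A → V)
    (hconn : (mgraphAdj (quiverEnds s t)).Connected) (hV : 2 ≤ Fintype.card V) (v : V) :
    ∃ b, (s b = v ∧ t b ≠ v) ∨ (t b = v ∧ s b ≠ v) := by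
  obtain ⟨w, hw⟩ := Fintype.exists_ne_of_one_lt_card (by omega) v
  obtain ⟨p⟩ := hconn.preconnected v w
  have hadj : ∃ u, (mgraphAdj (quiverEnds s t)).Adj v u := by
    cases p with
    | nil => exact absurd rfl hw.symm
    | cons hadj _ => exact ⟨_, hadj⟩
  obtain ⟨u, hadj⟩ := hadj
  rw [mgraphAdj, SimpleGraph.fromRel_adj] at hadj
  obtain ⟨hne, hr⟩ := hadj
  rcases hr with ⟨b, hb⟩ | ⟨b, hb⟩ <;> unfold quiverEnds at hb <;> rw [Sym2.eq_iff] at hb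
  · rcases hb with ⟨h1, h2⟩ | ⟨h1, h2⟩
    · exact ⟨b, Or.inl ⟨h1, by rw [h2]; exact fun q => hne q.symm⟩⟩
    · exact ⟨b, Or.inr ⟨h2, by rw [h1]; exact fun q => hne q.symm⟩⟩
  · rcases hb with ⟨h1, h2⟩ | ⟨h1, h2⟩
    · exact ⟨b, Or.inr ⟨h2, by rw [h1]; exact fun q => hne q.symm⟩⟩
    · exact ⟨b, Or.inl ⟨h1, by rw [h2]; exact fun q => hne q.symm⟩⟩

lemma two_le_indeg {V A : Type} [Fintype V] [Fintype A] [DecidableEq V] [DecidableEq A]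
    (s t : A → V) (htight : Tight s t (fun _ => 0))
    (hconn : (mgraphAdj (quiverEnds s t)).Connected) (hV : 2 ≤ Fintype.card V) (v : V) :
    2 ≤ (Finset.univ.filter fun b => t b = v).card := by
  classical
  by_contra hlt
  push_neg at hlt
  have hrem : ∀ b0, (∀ x ∈ quiverPolyhedron s t (fun _ => (0:ℤ)), x b0 = 0) → False :=
    fun b0 hzz => htight.2.1 b0 (removable_of_forced_zero s t _ b0 hzz)
  interval_cases hcard : (Finset.univ.filter fun b => t b = v).card
  · -- no incoming arrows
    have hI0 : ∀ b, t b ≠ v := by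
      intro b hb
      have : b ∈ Finset.univ.filter fun b => t b = v := by simp [hb]
      rw [Finset.card_eq_zero] at hcard
      rw [hcard] at this
      exact absurd this (Finset.notMem_empty b)
    have hzz : ∀ x ∈ quiverPolyhedron s t (fun _ => (0:ℤ)), ∀ b0, s b0 = v → x b0 = 0 := by
      intro x hx b0 hb0
      have hfl := hx.2 v
      unfold flowMap at hfl
      push_cast at hfl
      have h1 : (∑ b : A, if t b = v then x b else 0) = 0 :=
        Finset.sum_eq_zero fun b _ => if_neg (hI0 b)
      have h2 : (∑ b : A, if s b = v then x b else 0) = 0 := by linarith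
      have h3 := (Finset.sum_eq_zero_iff_of_nonneg (fun b _ => by
        by_cases hb : s b = v <;> simp [hb, hx.1 b])).mp h2 b0 (Finset.mem_univ b0)
      rwa [if_pos hb0] at h3
    obtain ⟨b1, hb1⟩ := exists_nonloop_at s t hconn hV v
    rcases hb1 with ⟨h1, _⟩ | ⟨h1, _⟩
    · exact hrem b1 (fun x hx => hzz x hx b1 h1)
    · exact hI0 b1 h1
  · -- exactly one incoming arrow a0
    rw [Finset.card_eq_one] at hcard
    obtain ⟨a0, ha0⟩ := hcard
    have hta0 : t a0 = v := by
      have : a0 ∈ Finset.univ.filter fun b => t b = v := by rw [ha0]; exact Finset.mem_singleton_self a0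
      simpa using this
    have hin0 : ∀ b, t b = v → b = a0 := by
      intro b hb
      have : b ∈ Finset.univ.filter fun b => t b = v := by simp [hb]
      rw [ha0] at this
      simpa using this
    by_cases hsa0 : s a0 = v
    · -- a0 is a loop at v; any other outgoing arrow is forced to zero
      have hzz : ∀ x ∈ quiverPolyhedron s t (fun _ => (0:ℤ)),
          ∀ b0, b0 ≠ a0 → s b0 = v → x b0 = 0 := by
        intro x hx b0 hb0ne hb0
        have hfl := hx.2 v
        unfold flowMap at hfl
        push_cast at hfl
        rw [sum_split a0 (fun b => if t b = v then x b else 0),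
            sum_split a0 (fun b => if s b = v then x b else 0),
            if_pos hta0, if_pos hsa0] at hfl
        have hz1 : (∑ b : {b : A // b ≠ a0}, if t b.1 = v then x b.1 else 0) = 0 :=
          Finset.sum_eq_zero fun b _ => if_neg fun q => b.2 (hin0 b.1 q)
        rw [hz1] at hfl
        have h2 : (∑ b : {b : A // b ≠ a0}, if s b.1 = v then x b.1 else 0) = 0 := by linarith
        have h3 := (Finset.sum_eq_zero_iff_of_nonneg (fun b _ => by
          by_cases hb : s b.1 = v <;> simp [hb, hx.1 b.1])).mp h2 ⟨b0, hb0ne⟩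
          (Finset.mem_univ _)
        simp only at h3
        rwa [if_pos hb0] at h3
      obtain ⟨b1, hb1⟩ := exists_nonloop_at s t hconn hV v
      rcases hb1 with ⟨h1, h2⟩ | ⟨h1, h2⟩
      · have hb1ne : b1 ≠ a0 := fun q => h2 (q ▸ hta0 : t b1 = v)
        exact hrem b1 (fun x hx => hzz x hx b1 hb1ne h1)
      · exact h2 ((hin0 b1 h1) ▸ hsa0 : s b1 = v)
    · -- a0 is not a loop: contract it
      have hne : s a0 ≠ t a0 := fun q => hsa0 (q.trans hta0)
      have hin' : ∀ b, t b = t a0 → b = a0 := fun b hb => hin0 b (hta0 ▸ hb)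
      exact htight.2.2 a0 hne (contractable_indeg s t a0 hne hin')

lemma two_le_outdeg {V A : Type} [Fintype V] [Fintype A] [DecidableEq V] [DecidableEq A]
    (s t : A → V) (htight : Tight s t (fun _ => 0))
    (hconn : (mgraphAdj (quiverEnds s t)).Connected) (hV : 2 ≤ Fintype.card V) (v : V) :
    2 ≤ (Finset.univ.filter fun b => s b = v).card := by
  classical
  by_contra hlt
  push_neg at hlt
  have hrem : ∀ b0, (∀ x ∈ quiverPolyhedron s t (fun _ => (0:ℤ)), x b0 = 0) → False :=
    fun b0 hzz => htight.2.1 b0 (removable_of_forced_zero s t _ b0 hzz)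
  interval_cases hcard : (Finset.univ.filter fun b => s b = v).card
  · -- no outgoing arrows
    have hI0 : ∀ b, s b ≠ v := by
      intro b hb
      have : b ∈ Finset.univ.filter fun b => s b = v := by simp [hb]
      rw [Finset.card_eq_zero] at hcard
      rw [hcard] at this
      exact absurd this (Finset.notMem_empty b)
    have hzz : ∀ x ∈ quiverPolyhedron s t (fun _ => (0:ℤ)), ∀ b0, t b0 = v → x b0 = 0 := by
      intro x hx b0 hb0
      have hfl := hx.2 v
      unfold flowMap at hfl
      push_cast at hfl
      have h1 : (∑ b : A, if s b = v then x b else 0) = 0 :=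
        Finset.sum_eq_zero fun b _ => if_neg (hI0 b)
      have h2 : (∑ b : A, if t b = v then x b else 0) = 0 := by linarith
      have h3 := (Finset.sum_eq_zero_iff_of_nonneg (fun b _ => by
        by_cases hb : t b = v <;> simp [hb, hx.1 b])).mp h2 b0 (Finset.mem_univ b0)
      rwa [if_pos hb0] at h3
    obtain ⟨b1, hb1⟩ := exists_nonloop_at s t hconn hV v
    rcases hb1 with ⟨h1, _⟩ | ⟨h1, _⟩
    · exact hI0 b1 h1
    · exact hrem b1 (fun x hx => hzz x hx b1 h1)
  · -- exactly one outgoing arrow a0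
    rw [Finset.card_eq_one] at hcard
    obtain ⟨a0, ha0⟩ := hcard
    have hsa0v : s a0 = v := by
      have : a0 ∈ Finset.univ.filter fun b => s b = v := by rw [ha0]; exact Finset.mem_singleton_self a0
      simpa using this
    have hout0 : ∀ b, s b = v → b = a0 := by
      intro b hb
      have : b ∈ Finset.univ.filter fun b => s b = v := by simp [hb]
      rw [ha0] at this
      simpa using this
    by_cases hta0 : t a0 = v
    · -- a0 is a loop at v; any other incoming arrow is forced to zero
      have hzz : ∀ x ∈ quiverPolyhedron s t (fun _ => (0:ℤ)),
          ∀ b0, b0 ≠ a0 → t b0 = v → x b0 = 0 := by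
        intro x hx b0 hb0ne hb0
        have hfl := hx.2 v
        unfold flowMap at hfl
        push_cast at hfl
        rw [sum_split a0 (fun b => if t b = v then x b else 0),
            sum_split a0 (fun b => if s b = v then x b else 0),
            if_pos hta0, if_pos hsa0v] at hfl
        have hz1 : (∑ b : {b : A // b ≠ a0}, if s b.1 = v then x b.1 else 0) = 0 :=
          Finset.sum_eq_zero fun b _ => if_neg fun q => b.2 (hout0 b.1 q)
        rw [hz1] at hfl
        have h2 : (∑ b : {b : A // b ≠ a0}, if t b.1 = v then x b.1 else 0) = 0 := by linarith
        have h3 := (Finset.sum_eq_zero_iff_of_nonneg (fun b _ => by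
          by_cases hb : t b.1 = v <;> simp [hb, hx.1 b.1])).mp h2 ⟨b0, hb0ne⟩
          (Finset.mem_univ _)
        simp only at h3
        rwa [if_pos hb0] at h3
      obtain ⟨b1, hb1⟩ := exists_nonloop_at s t hconn hV v
      rcases hb1 with ⟨h1, h2⟩ | ⟨h1, h2⟩
      · exact h2 ((hout0 b1 h1) ▸ hta0 : t b1 = v)
      · have hb1ne : b1 ≠ a0 := fun q => h2 (q ▸ hsa0v : s b1 = v)
        exact hrem b1 (fun x hx => hzz x hx b1 hb1ne h1)
    · -- a0 is not a loop: contract it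
      have hne : s a0 ≠ t a0 := fun q => hta0 (q ▸ hsa0v)
      have hout' : ∀ b, s b = s a0 → b = a0 := fun b hb => hout0 b (hsa0v ▸ hb)
      exact htight.2.2 a0 hne (contractable_outdeg s t a0 hne hout')

/-- in a prime quiver with `χ(Q) = d ≥ 2` which is tight for the zero
weight, `|Q0| ≤ d - 1`, and consequently `|Q1| = |Q0| + d - 1 ≤ 2 * (d - 1)`. -/
theorem stmt11 {V A : Type} [Fintype V] [Fintype A] [DecidableEq V] [DecidableEq A]
    (s t : A → V) (hprime : QuiverPrime s t) (d : ℕ) (hd : 2 ≤ d)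
    (hchi : Fintype.card A + Nat.card (mgraphAdj (quiverEnds s t)).ConnectedComponent
      = Fintype.card V + d)
    (htight : Tight s t (fun _ => 0)) :
    Fintype.card V ≤ d - 1 ∧
    Fintype.card A = Fintype.card V + d - 1 ∧
    Fintype.card A ≤ 2 * (d - 1) := by
  classical
  have hconn : (mgraphAdj (quiverEnds s t)).Connected := hprime.1
  haveI : Nonempty V := hconn.nonempty
  have hc1 : Nat.card (mgraphAdj (quiverEnds s t)).ConnectedComponent = 1 := by
    rw [Nat.card_eq_one_iff_unique]
    constructor
    · constructor
      intro c d
      refine SimpleGraph.ConnectedComponent.ind₂ (fun u w => ?_) c d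
      exact SimpleGraph.ConnectedComponent.sound (hconn.preconnected u w)
    · exact ⟨(mgraphAdj (quiverEnds s t)).connectedComponentMk Classical.ofNonempty⟩
  rw [hc1] at hchi
  have hVpos : 1 ≤ Fintype.card V := Fintype.card_pos
  by_cases hV : 2 ≤ Fintype.card V
  · have hdeg : ∀ v : V, 2 ≤ (Finset.univ.filter fun b => t b = v).card :=
      two_le_indeg s t htight hconn hV
    have hfib : Fintype.card A = ∑ v : V, (Finset.univ.filter fun b => t b = v).card := by
      rw [← Finset.card_univ]
      exact Finset.card_eq_sum_card_fiberwise (fun b _ => Finset.mem_univ (t b))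
    have hsum : 2 * Fintype.card V ≤ Fintype.card A := by
      rw [hfib]
      calc 2 * Fintype.card V = ∑ _v : V, 2 := by
            rw [Finset.sum_const, Finset.card_univ, smul_eq_mul, mul_comm]
        _ ≤ ∑ v : V, (Finset.univ.filter fun b => t b = v).card :=
            Finset.sum_le_sum fun v _ => hdeg v
    omega
  · omega
end

section
/- Let S be a commutative monoid generated by nonzero elements s_1,…,s_d, graded as S = ⨿_{k≥0} S_k with S_k + S_l ⊆ S_{k+l} and S_0 = {0}, where each generator s_i is homogeneous of positive degree; grade R = ℤ[t_1,…,t_d] by deg t_i = deg s_i. Define t^a ~ t^b iff t^a − t^b ∈ R_+ I (an equivalence relation on monomials of R), let Λ be a complete set of representatives of the ~-classes, for s ∈ S let Λ_s = {t^a ∈ Λ : Σ_i a_i s_i = s}, and for each s with |Λ_s| ≥ 2, after enumerating Λ_s = {t^{a_1},…,t^{a_p}}, set G_s = {t^{a_1} − t^{a_i} : i = 2,…,p}. Then ⋃_{s : |Λ_s| ≥ 2} G_s is a minimal homogeneous generating system of the ideal I = ker φ (it generates I and no proper subset generates I); in particular, I is minimally generated by Σ_{s ∈ S} (|Λ_s|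 − 1) elements. -/
/-!
Write `K = R₊ I`. The kernel `I` is spanned over `ℤ` by the binomials `t^m - t^m'` with
`Σ m_i s_i = Σ m'_i s_i`, and `K` by their multiples by non-constant monomials; all of these are
homogeneous. A binomial of `I` is congruent modulo `K` to the difference of the representatives in
`Λ` of its two monomials, which lies in the ideal generated by `G`; and the homogeneous elements of
`K` of degree `n` lie in the ideal generated by the binomials of `I` of degree `< n`, because
non-constant monomials have positive degree. Induction on the degree therefore shows that `G`
generates `I`.

For minimality, fix `t^{ρ σ} - t^a ∈ G` and let `θ` be the `ℤ`-linear form that is `1` on the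
monomials `∼`-equivalent to `t^a` and `0` on all others. It vanishes on `K`, which is spanned by
differences of `∼`-equivalent monomials, and on every element of `G` except `t^{ρ σ} - t^a`, where
it is `-1`. Since `span G' ⊆ ℤ-span G' + R₊ · span G'`, no `G' ⊆ G` omitting that element
generates `I`.
-/

open MvPolynomial

/-- The monomial `t^a = ∏ i, t_i ^ a i` in the polynomial ring `ℤ[t_1, …, t_d]`. -/
noncomputable def monomialOf {d : ℕ} (a : Fin d → ℕ) : MvPolynomial (Fin d) ℤ :=
  ∏ i, X i ^ a i

/-- The surjection `φ : ℤ[t_1, …, t_d] → ℤ[S]`, `t_i ↦ x^{s_i}`, onto the semigroup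
ring of the additively written commutative monoid `S` with generators `s i`. -/
noncomputable def semigroupHom {d : ℕ} {S : Type} [AddCommMonoid S] (s : Fin d → S) :
    MvPolynomial (Fin d) ℤ →ₐ[ℤ] AddMonoidAlgebra ℤ S :=
  MvPolynomial.aeval (fun i => AddMonoidAlgebra.single (s i) 1)

/-- The augmentation ideal `R₊` of `ℤ[t_1, …, t_d]`: polynomials with zero constant
term. -/
noncomputable def augIdeal (d : ℕ) : Ideal (MvPolynomial (Fin d) ℤ) :=
  RingHom.ker (constantCoeff : MvPolynomial (Fin d) ℤ →+* ℤ)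

open Finsupp
open scoped Pointwise

theorem MvPolynomial.IsWeightedHomogeneous.mem_of_mem_span {R σ M : Type*} [CommSemiring R]
    [AddCommMonoid M] {w : σ → M} {n : M} {p : MvPolynomial σ R}
    (hp : IsWeightedHomogeneous w p n) {T : Set (MvPolynomial σ R)}
    (hpT : p ∈ Submodule.span R T) {N : Submodule R (MvPolynomial σ R)}
    (hT : ∀ t ∈ T, weightedHomogeneousComponent w n t ∈ N) : p ∈ N := by
  rw [← hp.weightedHomogeneousComponent_same]
  exact (Submodule.span_le (p := N.comap (weightedHomogeneousComponent w n))).2 hT hpT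

theorem AddMonoidHom.map_weight {σ M N : Type*} [AddCommMonoid M] [AddCommMonoid N]
    (D : M →+ N) (w : σ → M) (f : σ →₀ ℕ) : D (weight w f) = weight (fun i => D (w i)) f := by
  simp [weight_apply, map_finsuppSum]

theorem Module.Basis.constr_indicator_eq_zero {ι R M : Type*} [CommRing R] [AddCommGroup M]
    [Module R M] (b : Basis ι R M) {N : Submodule R M}
    (hN : N ≤ Submodule.span R {x | x ∈ N ∧ ∃ i j, x = b i - b j}) (i₀ : ι) {x : M}
    (hx : x ∈ N) : b.constr R ({i | b i - b i₀ ∈ N}.indicator (1 : ι → R)) x = 0 := by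
  classical
  refine (Submodule.span_le (p := LinearMap.ker _)).2 ?_ (hN hx)
  rintro _ ⟨hij, i, j, rfl⟩
  have hclass : b i - b i₀ ∈ N ↔ b j - b i₀ ∈ N := by
    constructor <;> intro h
    · simpa using N.sub_mem h hij
    · simpa using N.add_mem hij h
  rw [SetLike.mem_coe, LinearMap.mem_ker, map_sub, Module.Basis.constr_basis,
    Module.Basis.constr_basis]
  simp only [Set.indicator_apply, Set.mem_ofPred_eq, hclass, Pi.one_apply, sub_self]

section SemigroupRing

variable {d : ℕ} {S : Type} [AddCommMonoid S] (s : Fin d → S)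

lemma monomialOf_eq_monomial (a : Fin d → ℕ) :
    monomialOf a = monomial (equivFunOnFinite.symm a) (1 : ℤ) := by
  simp [monomialOf, monomial_eq, Finsupp.prod_fintype]

lemma monomialOf_coe (m : Fin d →₀ ℕ) : monomialOf ⇑m = monomial m (1 : ℤ) := by
  simp [monomialOf_eq_monomial]

lemma weight_equivFunOnFinite_symm (a : Fin d → ℕ) :
    weight s (equivFunOnFinite.symm a) = ∑ i, a i • s i := by
  simp [weight_eq_sum]

lemma semigroupHom_monomial (m : Fin d →₀ ℕ) (c : ℤ) :
    semigroupHom s (monomial m c) = AddMonoidAlgebra.single (weight s m) c := by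
  simp only [semigroupHom, aeval_monomial, AddMonoidAlgebra.single_pow, one_pow, Finsupp.prod,
    weight_apply, Finsupp.sum]
  rw [AddMonoidAlgebra.prod_single, Finset.prod_const_one, Algebra.algebraMap_eq_smul_one,
    smul_mul_assoc, one_mul, AddMonoidAlgebra.smul_single, smul_eq_mul, mul_one]

lemma monomial_sub_monomial_mem_ker_iff {m m' : Fin d →₀ ℕ} :
    monomial m (1 : ℤ) - monomial m' 1 ∈ RingHom.ker (semigroupHom s) ↔
      weight s m = weight s m' := by
  rw [RingHom.mem_ker, map_sub, semigroupHom_monomial, semigroupHom_monomial, sub_eq_zero,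
    AddMonoidAlgebra.single_left_inj one_ne_zero]

lemma monomialOf_sub_monomialOf_mem_ker_iff {a b : Fin d → ℕ} :
    monomialOf a - monomialOf b ∈ RingHom.ker (semigroupHom s) ↔
      ∑ i, a i • s i = ∑ i, b i • s i := by
  rw [monomialOf_eq_monomial, monomialOf_eq_monomial, monomial_sub_monomial_mem_ker_iff,
    weight_equivFunOnFinite_symm, weight_equivFunOnFinite_symm]

def weightBinomials : Set (MvPolynomial (Fin d) ℤ) :=
  {p | ∃ m m' : Fin d →₀ ℕ, weight s m = weight s m' ∧ p = monomial m 1 - monomial m' 1}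

lemma mem_span_weightBinomials_of_mem_ker {f : MvPolynomial (Fin d) ℤ}
    (hf : f ∈ RingHom.ker (semigroupHom s)) : f ∈ Submodule.span ℤ (weightBinomials s) := by
  set π := Function.invFun (weight s : (Fin d →₀ ℕ) → S)
  have hπ (m : Fin d →₀ ℕ) : weight s (π (weight s m)) = weight s m :=
    Function.invFun_eq ⟨m, rfl⟩
  -- `g ↦ mapDomain π (φ g)` replaces every monomial by a fixed monomial of the same weight,
  -- and it kills `I` because it factors through `φ`.
  suffices h : ∀ g, g - AddMonoidAlgebra.mapDomain π (semigroupHom s g) ∈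
      Submodule.span ℤ (weightBinomials s) by
    simpa [RingHom.mem_ker.1 hf, AddMonoidAlgebra.mapDomain_zero] using h f
  intro g
  induction g using MvPolynomial.induction_on' with
  | monomial m c =>
    rw [semigroupHom_monomial, AddMonoidAlgebra.mapDomain_single]
    have hc : monomial m c - monomial (π (weight s m)) c =
        c • (monomial m 1 - monomial (π (weight s m)) 1) := by
      simp [smul_sub, smul_monomial]
    exact hc ▸ Submodule.smul_mem _ c (Submodule.subset_span ⟨_, _, (hπ m).symm, rfl⟩)
  | add p q hp hq =>
    rw [map_add, AddMonoidAlgebra.mapDomain_add, add_sub_add_comm]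
    exact add_mem hp hq

lemma mem_span_monomials_of_mem_augIdeal {f : MvPolynomial (Fin d) ℤ} (hf : f ∈ augIdeal d) :
    f ∈ Submodule.span ℤ ((monomial · (1 : ℤ)) '' {c : Fin d →₀ ℕ | c ≠ 0}) := by
  rw [f.as_sum]
  refine Submodule.sum_mem _ fun m hm => ?_
  have hm0 : m ≠ 0 := by
    rintro rfl
    exact (MvPolynomial.mem_support_iff.1 hm) hf
  rw [← mul_one (coeff m f), ← smul_eq_mul, ← smul_monomial]
  exact Submodule.smul_mem _ _ (Submodule.subset_span ⟨m, hm0, rfl⟩)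

lemma mem_span_of_mem_augIdeal_mul_ker {f : MvPolynomial (Fin d) ℤ}
    (hf : f ∈ augIdeal d * RingHom.ker (semigroupHom s)) :
    f ∈ Submodule.span ℤ
      ((monomial · (1 : ℤ)) '' {c : Fin d →₀ ℕ | c ≠ 0} * weightBinomials s) := by
  refine Submodule.mul_induction_on hf (fun p hp q hq => ?_) fun _ _ => add_mem
  rw [← Submodule.span_mul_span]
  exact Submodule.mul_mem_mul (mem_span_monomials_of_mem_augIdeal hp)
    (mem_span_weightBinomials_of_mem_ker s hq)

lemma augIdeal_mul_ker_le_span_binomials :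
    (augIdeal d * RingHom.ker (semigroupHom s)).restrictScalars ℤ ≤ Submodule.span ℤ
      {x | x ∈ augIdeal d * RingHom.ker (semigroupHom s) ∧
        ∃ m m' : Fin d →₀ ℕ, x = monomial m 1 - monomial m' 1} := by
  intro f hf
  refine Submodule.span_mono ?_ (mem_span_of_mem_augIdeal_mul_ker s hf)
  rintro _ ⟨_, ⟨c, hc, rfl⟩, _, ⟨m, m', hmm', rfl⟩, rfl⟩
  refine ⟨Ideal.mul_mem_mul ?_ ((monomial_sub_monomial_mem_ker_iff s).2 hmm'), c + m, c + m', ?_⟩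
  · classical simpa [augIdeal, constantCoeff_monomial] using hc
  · simp [mul_sub, monomial_mul]

lemma span_le_span_sup_augIdeal_mul (T : Set (MvPolynomial (Fin d) ℤ)) :
    (Ideal.span T).restrictScalars ℤ ≤
      Submodule.span ℤ T ⊔ (augIdeal d * Ideal.span T).restrictScalars ℤ := by
  intro x hx
  induction hx using Submodule.span_induction with
  | mem x hx => exact Submodule.mem_sup_left (Submodule.subset_span hx)
  | zero => exact zero_mem _
  | add x y _ _ hx hy => exact add_mem hx hy
  | smul r x hxT hx =>
    have hr : r - C (constantCoeff r) ∈ augIdeal d := by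
      simp [augIdeal]
    have hsplit : r • x = constantCoeff r • x + (r - C (constantCoeff r)) * x := by
      rw [smul_eq_mul, sub_mul, ← smul_eq_C_mul]
      abel
    rw [hsplit]
    exact add_mem (Submodule.smul_mem _ _ hx)
      (Submodule.mem_sup_right (Ideal.mul_mem_mul hr hxT))

lemma isWeightedHomogeneous_monomial_sub_monomial (D : S →+ ℕ) {m m' : Fin d →₀ ℕ}
    (h : weight s m = weight s m') :
    IsWeightedHomogeneous (fun i => D (s i)) (monomial m (1 : ℤ) - monomial m' 1)
      (D (weight s m)) := by
  rw [← mem_weightedHomogeneousSubmodule]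
  refine sub_mem (isWeightedHomogeneous_monomial _ _ _ ?_)
    (isWeightedHomogeneous_monomial _ _ _ ?_)
  · exact (D.map_weight s m).symm
  · rw [← D.map_weight, h]

lemma mem_of_mem_augIdeal_mul_ker_of_isWeightedHomogeneous (D : S →+ ℕ)
    (hD : ∀ i, D (s i) ≠ 0) {J : Ideal (MvPolynomial (Fin d) ℤ)} {n : ℕ}
    (hJ : ∀ m m' : Fin d →₀ ℕ, weight s m = weight s m' → D (weight s m) < n →
      monomial m 1 - monomial m' 1 ∈ J)
    {f : MvPolynomial (Fin d) ℤ} (hf : f ∈ augIdeal d * RingHom.ker (semigroupHom s))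
    (hfn : IsWeightedHomogeneous (fun i => D (s i)) f n) : f ∈ J := by
  refine hfn.mem_of_mem_span (mem_span_of_mem_augIdeal_mul_ker s hf) (N := J.restrictScalars ℤ) ?_
  rintro _ ⟨_, ⟨c, hc, rfl⟩, _, ⟨m, m', hmm', rfl⟩, rfl⟩
  have hhom := (isWeightedHomogeneous_monomial (fun i => D (s i)) c (1 : ℤ) rfl).mul
    (isWeightedHomogeneous_monomial_sub_monomial s D hmm')
  rw [weightedHomogeneousComponent_of_mem hhom]
  split_ifs with hn
  · obtain ⟨i, hi⟩ : ∃ i, c i ≠ 0 := by simpa [Finsupp.ext_iff] using hc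
    have hci := le_weight_of_ne_zero' (fun i => D (s i)) hi
    exact J.mul_mem_left _ (hJ m m' hmm' (by have := hD i; omega))
  · exact zero_mem _

theorem ker_semigroupHom_le_of_binomial_congr (D : S →+ ℕ) (hD : ∀ i, D (s i) ≠ 0)
    (J : Ideal (MvPolynomial (Fin d) ℤ))
    (hJ : ∀ m m' : Fin d →₀ ℕ, weight s m = weight s m' → ∃ n n' : Fin d →₀ ℕ,
      monomial m 1 - monomial n 1 ∈ augIdeal d * RingHom.ker (semigroupHom s) ∧
      monomial m' 1 - monomial n' 1 ∈ augIdeal d * RingHom.ker (semigroupHom s) ∧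
      monomial n 1 - monomial n' 1 ∈ J) :
    RingHom.ker (semigroupHom s) ≤ J := by
  have key : ∀ k (m m' : Fin d →₀ ℕ), weight s m = weight s m' → D (weight s m) = k →
      monomial m (1 : ℤ) - monomial m' 1 ∈ J := by
    intro k
    induction k using Nat.strong_induction_on with
    | _ k ih =>
    intro m m' hmm' hk
    have reduce (x y : Fin d →₀ ℕ) (hx : weight s x = weight s m)
        (hxy : monomial x 1 - monomial y 1 ∈ augIdeal d * RingHom.ker (semigroupHom s)) :
        monomial x (1 : ℤ) - monomial y 1 ∈ J := by
      have hxy' := (monomial_sub_monomial_mem_ker_iff s).1 (Ideal.mul_le_right hxy)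
      refine mem_of_mem_augIdeal_mul_ker_of_isWeightedHomogeneous s D hD
        (fun a b hab hlt => ih _ (hk ▸ hlt) a b hab rfl) hxy ?_
      rw [← hx]
      exact isWeightedHomogeneous_monomial_sub_monomial s D hxy'
    obtain ⟨n, n', hn, hn', hnn'⟩ := hJ m m' hmm'
    have hsplit : monomial m (1 : ℤ) - monomial m' 1 =
        (monomial m 1 - monomial n 1) - (monomial m' 1 - monomial n' 1) +
          (monomial n 1 - monomial n' 1) := by ring
    rw [hsplit]
    exact add_mem (sub_mem (reduce m n rfl hn) (reduce m' n' hmm'.symm hn')) hnn'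
  intro f hf
  refine (Submodule.span_le (p := J.restrictScalars ℤ)).2 ?_
    (mem_span_weightBinomials_of_mem_ker s hf)
  rintro _ ⟨m, m', h, rfl⟩
  exact key _ m m' h rfl

noncomputable def classFunctional (m₀ : Fin d →₀ ℕ) : MvPolynomial (Fin d) ℤ →ₗ[ℤ] ℤ :=
  (basisMonomials (Fin d) ℤ).constr ℤ
    ({m | monomial m 1 - monomial m₀ 1 ∈ augIdeal d * RingHom.ker (semigroupHom s)}.indicator 1)

lemma classFunctional_monomial (m₀ m : Fin d →₀ ℕ) :
    classFunctional s m₀ (monomial m 1) =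
      {m | monomial m 1 - monomial m₀ 1 ∈ augIdeal d * RingHom.ker (semigroupHom s)}.indicator
        1 m := by
  rw [classFunctional, ← congr_fun (coe_basisMonomials (Fin d) ℤ) m, Module.Basis.constr_basis]

lemma classFunctional_eq_zero_of_mem (m₀ : Fin d →₀ ℕ) {x : MvPolynomial (Fin d) ℤ}
    (hx : x ∈ augIdeal d * RingHom.ker (semigroupHom s)) : classFunctional s m₀ x = 0 :=
  Module.Basis.constr_indicator_eq_zero _ (augIdeal_mul_ker_le_span_binomials s) m₀ hx

end SemigroupRing

section Representatives

variable {d : ℕ} {S : Type} [AddCommMonoid S] (s : Fin d → S) (Λ : Set (Fin d → ℕ))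
  (ρ : S → (Fin d → ℕ))

def IsSystemOfRepresentatives : Prop :=
  ∀ a : Fin d → ℕ, ∃! b : Fin d → ℕ, b ∈ Λ ∧
    monomialOf a - monomialOf b ∈ augIdeal d * RingHom.ker (semigroupHom s)

def SelectsFromFibers : Prop :=
  ∀ σ : S, {a | a ∈ Λ ∧ ∑ i, a i • s i = σ}.Nonempty → ρ σ ∈ Λ ∧ ∑ i, ρ σ i • s i = σ

def repBinomials : Set (MvPolynomial (Fin d) ℤ) :=
  {p | ∃ (σ : S) (a : Fin d → ℕ), a ∈ Λ ∧ (∑ i, a i • s i) = σ ∧ a ≠ ρ σ ∧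
    p = monomialOf (ρ σ) - monomialOf a}

variable {s Λ ρ}

lemma exists_of_mem_repBinomials (hρ : SelectsFromFibers s Λ ρ) {p : MvPolynomial (Fin d) ℤ}
    (hp : p ∈ repBinomials s Λ ρ) :
    ∃ a b : Fin d → ℕ, ∑ i, a i • s i = ∑ i, b i • s i ∧ p = monomialOf a - monomialOf b := by
  obtain ⟨σ, a, ha, rfl, -, rfl⟩ := hp
  exact ⟨_, a, (hρ _ ⟨a, ha, rfl⟩).2, rfl⟩

lemma repBinomials_subset_ker (hρ : SelectsFromFibers s Λ ρ) :
    repBinomials s Λ ρ ⊆ RingHom.ker (semigroupHom s) := by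
  intro p hp
  obtain ⟨a, b, hab, rfl⟩ := exists_of_mem_repBinomials hρ hp
  exact (monomialOf_sub_monomialOf_mem_ker_iff s).2 hab

lemma isWeightedHomogeneous_of_mem_repBinomials (D : S →+ ℕ) (hρ : SelectsFromFibers s Λ ρ)
    {p : MvPolynomial (Fin d) ℤ} (hp : p ∈ repBinomials s Λ ρ) :
    ∃ n, IsWeightedHomogeneous (fun i => D (s i)) p n := by
  obtain ⟨a, b, hab, rfl⟩ := exists_of_mem_repBinomials hρ hp
  rw [monomialOf_eq_monomial, monomialOf_eq_monomial]
  exact ⟨_, isWeightedHomogeneous_monomial_sub_monomial s D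
    (by rwa [weight_equivFunOnFinite_symm, weight_equivFunOnFinite_symm])⟩

lemma monomialOf_rho_sub_mem_span {a : Fin d → ℕ} (ha : a ∈ Λ) :
    monomialOf (ρ (∑ i, a i • s i)) - monomialOf a ∈ Ideal.span (repBinomials s Λ ρ) := by
  by_cases h : a = ρ (∑ i, a i • s i)
  · rw [← h, sub_self]
    exact zero_mem _
  · exact Ideal.subset_span ⟨_, a, ha, rfl, h, rfl⟩

lemma monomialOf_sub_mem_span_repBinomials {a b : Fin d → ℕ} (ha : a ∈ Λ) (hb : b ∈ Λ)
    (hab : ∑ i, a i • s i = ∑ i, b i • s i) :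
    monomialOf a - monomialOf b ∈ Ideal.span (repBinomials s Λ ρ) := by
  have h := sub_mem (monomialOf_rho_sub_mem_span (s := s) (ρ := ρ) hb)
    (monomialOf_rho_sub_mem_span ha)
  rwa [hab, sub_sub_sub_cancel_left] at h

lemma ker_le_span_repBinomials (hΛ : IsSystemOfRepresentatives s Λ) (D : S →+ ℕ)
    (hD : ∀ i, D (s i) ≠ 0) :
    RingHom.ker (semigroupHom s) ≤ Ideal.span (repBinomials s Λ ρ) := by
  refine ker_semigroupHom_le_of_binomial_congr s D hD _ fun m m' hmm' => ?_
  obtain ⟨b, ⟨hbΛ, hb⟩, -⟩ := hΛ ⇑m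
  obtain ⟨b', ⟨hb'Λ, hb'⟩, -⟩ := hΛ ⇑m'
  have hsum (x : Fin d →₀ ℕ) (y : Fin d → ℕ)
      (h : monomialOf ⇑x - monomialOf y ∈ augIdeal d * RingHom.ker (semigroupHom s)) :
      ∑ i, y i • s i = weight s x := by
    rw [weight_eq_sum]
    exact ((monomialOf_sub_monomialOf_mem_ker_iff s).1 (Ideal.mul_le_right h)).symm
  refine ⟨equivFunOnFinite.symm b, equivFunOnFinite.symm b', ?_, ?_, ?_⟩
  · rwa [← monomialOf_eq_monomial, ← monomialOf_coe]
  · rwa [← monomialOf_eq_monomial, ← monomialOf_coe]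
  · rw [← monomialOf_eq_monomial, ← monomialOf_eq_monomial]
    exact monomialOf_sub_mem_span_repBinomials hbΛ hb'Λ
      (by rw [hsum m b hb, hsum m' b' hb', hmm'])

lemma IsSystemOfRepresentatives.eq_of_monomialOf_sub_mem (hΛ : IsSystemOfRepresentatives s Λ)
    {a b : Fin d → ℕ} (ha : a ∈ Λ) (hb : b ∈ Λ)
    (hab : monomialOf a - monomialOf b ∈ augIdeal d * RingHom.ker (semigroupHom s)) : a = b :=
  (hΛ a).unique ⟨ha, by simp⟩ ⟨hb, hab⟩

lemma classFunctional_monomialOf (hΛ : IsSystemOfRepresentatives s Λ) {a₀ a : Fin d → ℕ}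
    (ha₀ : a₀ ∈ Λ) (ha : a ∈ Λ) :
    classFunctional s (equivFunOnFinite.symm a₀) (monomialOf a) = if a = a₀ then 1 else 0 := by
  have hclass : monomialOf a - monomialOf a₀ ∈ augIdeal d * RingHom.ker (semigroupHom s) ↔
      a = a₀ := ⟨hΛ.eq_of_monomialOf_sub_mem ha ha₀, by rintro rfl; simp⟩
  rw [monomialOf_eq_monomial, monomialOf_eq_monomial] at hclass
  classical
  rw [monomialOf_eq_monomial, classFunctional_monomial, Set.indicator_apply]
  exact if_congr hclass rfl rfl

theorem span_ne_ker_of_ssubset (hΛ : IsSystemOfRepresentatives s Λ)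
    (hρ : SelectsFromFibers s Λ ρ) {G' : Set (MvPolynomial (Fin d) ℤ)}
    (hG' : G' ⊂ repBinomials s Λ ρ) : Ideal.span G' ≠ RingHom.ker (semigroupHom s) := by
  obtain ⟨_, ⟨_, a₀, ha₀, rfl, hne, rfl⟩, hpG'⟩ := Set.exists_of_ssubset hG'
  set θ := classFunctional s (equivFunOnFinite.symm a₀)
  have hθG' : ∀ g ∈ G', θ g = 0 := by
    intro g hg
    obtain ⟨_, b, hb, rfl, hbne, rfl⟩ := hG'.subset hg
    obtain ⟨hρb, hρbσ⟩ := hρ _ ⟨b, hb, rfl⟩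
    have hρb₀ : ρ (∑ i, b i • s i) ≠ a₀ := fun h => hne (by rw [← h, hρbσ])
    have hb₀ : b ≠ a₀ := by
      rintro rfl
      exact hpG' hg
    rw [map_sub, classFunctional_monomialOf hΛ ha₀ hρb, classFunctional_monomialOf hΛ ha₀ hb,
      if_neg hρb₀, if_neg hb₀, sub_self]
  obtain ⟨hρ₀, hρ₀σ⟩ := hρ _ ⟨a₀, ha₀, rfl⟩
  intro hspan
  have hp : monomialOf (ρ (∑ i, a₀ i • s i)) - monomialOf a₀ ∈ Ideal.span G' :=
    hspan ▸ (monomialOf_sub_monomialOf_mem_ker_iff s).2 hρ₀σ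
  obtain ⟨y, hy, z, hz, hyz⟩ := Submodule.mem_sup.1 (span_le_span_sup_augIdeal_mul G' hp)
  rw [Submodule.restrictScalars_mem, hspan] at hz
  have hθp := congr_arg θ hyz
  rw [map_add, (Submodule.span_le (p := LinearMap.ker θ)).2 hθG' hy,
    classFunctional_eq_zero_of_mem s _ hz, map_sub, classFunctional_monomialOf hΛ ha₀ hρ₀,
    classFunctional_monomialOf hΛ ha₀ ha₀, if_neg (Ne.symm hne), if_pos rfl] at hθp
  norm_num at hθp

end Representatives

theorem stmt12_general {d : ℕ} {S : Type} [AddCommMonoid S] (s : Fin d → S)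
    (hs : ∀ i, s i ≠ 0)
    (deg : S → ℕ)
    (hdeg0 : ∀ x : S, deg x = 0 ↔ x = 0)
    (hdegadd : ∀ x y : S, deg (x + y) = deg x + deg y)
    (Λ : Set (Fin d → ℕ))
    (hΛ : ∀ a : Fin d → ℕ, ∃! b : Fin d → ℕ, b ∈ Λ ∧
      monomialOf a - monomialOf b ∈ augIdeal d * RingHom.ker (semigroupHom s))
    (ρ : S → (Fin d → ℕ))
    (hρ : ∀ σ : S, {a | a ∈ Λ ∧ ∑ i, a i • s i = σ}.Nonempty →
      ρ σ ∈ Λ ∧ ∑ i, ρ σ i • s i = σ)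
    (G : Set (MvPolynomial (Fin d) ℤ))
    (hG : G = {p | ∃ (σ : S) (a : Fin d → ℕ), a ∈ Λ ∧ (∑ i, a i • s i) = σ ∧ a ≠ ρ σ ∧
      p = monomialOf (ρ σ) - monomialOf a}) :
    (∀ p ∈ G, ∃ n : ℕ, MvPolynomial.IsWeightedHomogeneous (fun i => deg (s i)) p n) ∧
    Ideal.span G = RingHom.ker (semigroupHom s) ∧
    ∀ G' : Set (MvPolynomial (Fin d) ℤ), G' ⊂ G →
      Ideal.span G' ≠ RingHom.ker (semigroupHom s) := by
  let D : S →+ ℕ := { toFun := deg, map_zero' := (hdeg0 0).2 rfl, map_add' := hdegadd }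
  have hD : ∀ i, D (s i) ≠ 0 := fun i h => hs i ((hdeg0 _).1 h)
  subst hG
  exact ⟨fun p hp => isWeightedHomogeneous_of_mem_repBinomials D hρ hp,
    le_antisymm (Ideal.span_le.2 (repBinomials_subset_ker hρ)) (ker_le_span_repBinomials hΛ D hD),
    fun G' hG' => span_ne_ker_of_ssubset hΛ hρ hG'⟩

/-- for a graded commutative monoid `S` with `S₀ = {0}`, generated by
nonzero homogeneous elements `s_1, …, s_d`, the binomials `t^{ρ σ} - t^a`
(`a ∈ Λ_σ`, `a ≠ ρ σ`), where `Λ` is a complete set of representatives of the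
congruence `t^a ∼ t^b ⇔ t^a - t^b ∈ R₊ I` and `ρ σ ∈ Λ_σ` is a chosen
representative, form a minimal homogeneous generating system of `I = ker φ`. -/
theorem stmt12 {d : ℕ} {S : Type} [AddCommMonoid S] (s : Fin d → S)
    (hs : ∀ i, s i ≠ 0)
    (hgen : ∀ x : S, ∃ a : Fin d → ℕ, x = ∑ i, a i • s i)
    (deg : S → ℕ)
    (hdeg0 : ∀ x : S, deg x = 0 ↔ x = 0)
    (hdegadd : ∀ x y : S, deg (x + y) = deg x + deg y)
    (Λ : Set (Fin d → ℕ))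
    (hΛ : ∀ a : Fin d → ℕ, ∃! b : Fin d → ℕ, b ∈ Λ ∧
      monomialOf a - monomialOf b ∈ augIdeal d * RingHom.ker (semigroupHom s))
    (ρ : S → (Fin d → ℕ))
    (hρ : ∀ σ : S, {a | a ∈ Λ ∧ ∑ i, a i • s i = σ}.Nonempty →
      ρ σ ∈ Λ ∧ ∑ i, ρ σ i • s i = σ)
    (G : Set (MvPolynomial (Fin d) ℤ))
    (hG : G = {p | ∃ (σ : S) (a : Fin d → ℕ), a ∈ Λ ∧ (∑ i, a i • s i) = σ ∧ a ≠ ρ σ ∧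
      p = monomialOf (ρ σ) - monomialOf a}) :
    (∀ p ∈ G, ∃ n : ℕ, MvPolynomial.IsWeightedHomogeneous (fun i => deg (s i)) p n) ∧
    Ideal.span G = RingHom.ker (semigroupHom s) ∧
    ∀ G' : Set (MvPolynomial (Fin d) ℤ), G' ⊂ G →
      Ideal.span G' ≠ RingHom.ker (semigroupHom s) :=
  stmt12_general s hs deg hdeg0 hdegadd Λ hΛ ρ hρ G hG
end

section
/- Let n ≥ 1, k ≥ 4, and let m_1,…,m_k, q_1,…,q_k be n×n permutation matrices with m_1 + ⋯ + m_k = q_1 + ⋯ + q_k. Suppose 0 ≤ l ≤ n − 2 and p is a near perfect matching with p ≤ m_1 + m_2 (entrywise) such that p and q_1 have exactly l common entries equal to 1. Then there exist an index j with 3 ≤ j ≤ k, permutation matrices m'_1, m'_2, m'_j, and a near perfect matching p' such that m_1 + m_2 + m_j = m'_1 + m'_2 + m'_j, p' ≤ m'_1 + m'_2 (entrywise), and p' and q_1 have exactly l + 1 common entries equal to 1. -/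
/-- An `n × n` permutation matrix: a 0-1 matrix with exactly one `1` in each row and
each column. -/
def IsPermMatrix {n : ℕ} (M : Matrix (Fin n) (Fin n) ℕ) : Prop :=
  (∀ i j, M i j ≤ 1) ∧ (∀ i, ∑ j, M i j = 1) ∧ (∀ j, ∑ i, M i j = 1)

/-- A near perfect matching: a 0-1 matrix with at most one `1` in each row and each
column, and exactly `n - 1` entries equal to `1`. -/
def IsNearPerfectMatching {n : ℕ} (M : Matrix (Fin n) (Fin n) ℕ) : Prop :=
  (∀ i j, M i j ≤ 1) ∧ (∀ i, ∑ j, M i j ≤ 1) ∧ (∀ j, ∑ i, M i j ≤ 1) ∧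
    (∑ i, ∑ j, M i j) + 1 = n

/-- The number of common entries equal to `1` of two 0-1 matrices. -/
def commonOnes {n : ℕ} (p q : Matrix (Fin n) (Fin n) ℕ) : ℕ :=
  (Finset.univ.filter (fun ij : Fin n × Fin n => p ij.1 ij.2 = 1 ∧ q ij.1 ij.2 = 1)).card

open Finset

/-!
Let `r` be the row missed by `p` and `(r, c)` the entry of `q₁` in that row. Adding `(r, c)` to `p`
and removing the entry of `p` in column `c` (or, when column `c` is free, an entry of `p` off `q₁`,
which exists because `l < n - 1`) gives a near perfect matching `p'` sharing `l + 1` entries with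
`q₁`. Since `q₁ (r, c) = 1` and `∑ mᵢ = ∑ qᵢ`, some `j ≥ 3` has `(m₁ + m₂ + m_j) (r, c) ≥ 1`, so
`p' ≤ H := m₁ + m₂ + m_j`, a matrix with all line sums `3`. By Hall's theorem `H - p'` contains a
permutation matrix `m'_j`: its row sums are at least `2`, while any `t` of its columns carry at most
`2t + 1` because `p'` misses only one column. Hall again splits the `2`-regular `H - m'_j` into
`m'₁ + m'₂`.
-/

variable {n : ℕ}

theorem apply_le_one_of_row_sum_le_one {M : Matrix (Fin n) (Fin n) ℕ} {i : Fin n}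
    (h : ∑ j, M i j ≤ 1) (j : Fin n) : M i j ≤ 1 :=
  (single_le_sum (fun _ _ => Nat.zero_le _) (mem_univ j)).trans h

theorem isPermMatrix_of_sum_eq_one {M : Matrix (Fin n) (Fin n) ℕ}
    (hrow : ∀ i, ∑ j, M i j = 1) (hcol : ∀ j, ∑ i, M i j = 1) : IsPermMatrix M :=
  ⟨fun i => apply_le_one_of_row_sum_le_one (hrow i).le, hrow, hcol⟩

theorem isPermMatrix_permMatrix (σ : Equiv.Perm (Fin n)) : IsPermMatrix (σ.permMatrix ℕ) :=
  isPermMatrix_of_sum_eq_one (fun i => by simp) (fun j => by simp [← Equiv.eq_symm_apply])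

theorem exists_isPermMatrix_le_of_sum_lt {d : ℕ} (H : Matrix (Fin n) (Fin n) ℕ)
    (hrow : ∀ i, d ≤ ∑ j, H i j)
    (hcol : ∀ T : Finset (Fin n), ∑ j ∈ T, ∑ i, H i j < d * (#T + 1)) :
    ∃ w, IsPermMatrix w ∧ ∀ i j, w i j ≤ H i j := by
  classical
  let nbhd : Fin n → Finset (Fin n) := fun i => {j | 0 < H i j}
  have hall : ∀ S : Finset (Fin n), #S ≤ #(S.biUnion nbhd) := by
    intro S
    set T := S.biUnion nbhd
    have hout : ∀ i ∈ S, ∀ j ∉ T, H i j = 0 := fun i hi j hj =>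
      Nat.eq_zero_of_not_pos fun hpos => hj (mem_biUnion.2 ⟨i, hi, by simpa [nbhd] using hpos⟩)
    have : d * #S < d * (#T + 1) := calc
      d * #S ≤ ∑ i ∈ S, ∑ j, H i j := by
        rw [mul_comm, ← smul_eq_mul, ← sum_const]; exact sum_le_sum fun i _ => hrow i
      _ = ∑ i ∈ S, ∑ j ∈ T, H i j := sum_congr rfl fun i hi =>
        (sum_subset (subset_univ T) fun j _ hj => hout i hi j hj).symm
      _ = ∑ j ∈ T, ∑ i ∈ S, H i j := sum_comm
      _ ≤ ∑ j ∈ T, ∑ i, H i j := sum_le_sum fun j _ => sum_le_sum_of_subset (subset_univ S)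
      _ < d * (#T + 1) := hcol T
    exact Nat.lt_succ_iff.mp (Nat.lt_of_mul_lt_mul_left this)
  obtain ⟨f, hf, hfH⟩ := (all_card_le_biUnion_card_iff_exists_injective nbhd).1 hall
  let σ : Equiv.Perm (Fin n) := Equiv.ofBijective f hf.bijective_of_finite
  refine ⟨σ.permMatrix ℕ, isPermMatrix_permMatrix σ, fun i j => ?_⟩
  by_cases h : σ i = j
  · subst h; simpa [nbhd, σ, Nat.one_le_iff_ne_zero, Nat.pos_iff_ne_zero] using hfH i
  · simp [h]

namespace IsPermMatrix

variable {H w : Matrix (Fin n) (Fin n) ℕ}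

theorem row_sum_tsub (hw : IsPermMatrix w) (hle : ∀ i j, w i j ≤ H i j) (i : Fin n) :
    ∑ j, (H - w) i j = ∑ j, H i j - 1 := by
  simp only [Matrix.sub_apply]
  rw [sum_tsub_distrib _ fun j _ => hle i j, hw.2.1 i]

theorem col_sum_tsub (hw : IsPermMatrix w) (hle : ∀ i j, w i j ≤ H i j) (j : Fin n) :
    ∑ i, (H - w) i j = ∑ i, H i j - 1 := by
  simp only [Matrix.sub_apply]
  rw [sum_tsub_distrib _ fun i _ => hle i j, hw.2.2 j]

theorem apply_eq_zero_of_ne (hw : IsPermMatrix w) {r c a : Fin n} (hrc : w r c = 1)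
    (ha : a ≠ r) : w a c = 0 := by
  have hsum := hw.2.2 c
  rw [← add_sum_erase _ _ (mem_univ r), hrc, add_eq_left, sum_eq_zero_iff] at hsum
  exact hsum a (mem_erase.2 ⟨ha, mem_univ a⟩)

end IsPermMatrix

theorem exists_isPermMatrix_add_of_sum_eq_two (W : Matrix (Fin n) (Fin n) ℕ)
    (hrow : ∀ i, ∑ j, W i j = 2) (hcol : ∀ j, ∑ i, W i j = 2) :
    ∃ u v, IsPermMatrix u ∧ IsPermMatrix v ∧ W = u + v := by
  obtain ⟨u, hu, huW⟩ := exists_isPermMatrix_le_of_sum_lt (d := 2) W (fun i => (hrow i).ge)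
    fun T => by rw [sum_congr rfl fun j _ => hcol j, sum_const, smul_eq_mul]; omega
  refine ⟨u, W - u, hu, isPermMatrix_of_sum_eq_one (fun i => ?_) (fun j => ?_), ?_⟩
  · rw [hu.row_sum_tsub huW, hrow]
  · rw [hu.col_sum_tsub huW, hcol]
  · ext i j
    simp [Nat.add_sub_cancel' (huW i j)]

namespace IsNearPerfectMatching

variable {p : Matrix (Fin n) (Fin n) ℕ}

theorem exists_row_sum_eq_zero (hp : IsNearPerfectMatching p) : ∃ r, ∑ j, p r j = 0 := by
  by_contra! h
  have : n ≤ ∑ i, ∑ j, p i j := by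
    simpa using sum_le_sum fun i (_ : i ∈ univ) => Nat.one_le_iff_ne_zero.2 (h i)
  have := hp.2.2.2
  omega

theorem card_le_sum_col_add_one (hp : IsNearPerfectMatching p) (T : Finset (Fin n)) :
    #T ≤ ∑ j ∈ T, ∑ i, p i j + 1 := by
  have hsplit : ∑ j ∈ T, ∑ i, p i j + ∑ j ∈ Tᶜ, ∑ i, p i j + 1 = n := by
    rw [sum_add_sum_compl, sum_comm, hp.2.2.2]
  have hcompl : ∑ j ∈ Tᶜ, ∑ i, p i j ≤ #Tᶜ := by
    simpa using sum_le_sum fun j (_ : j ∈ Tᶜ) => hp.2.2.1 j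
  have := card_add_card_compl T
  simp only [Fintype.card_fin] at this
  omega

theorem exists_add_single_eq (hp : IsNearPerfectMatching p) {r c a b : Fin n}
    (hr : ∑ j, p r j = 0) (hc : ∑ i, p i c = 0 ∨ b = c) (hab : p a b = 1) :
    ∃ p', IsNearPerfectMatching p' ∧
      p' + Matrix.single a b 1 = p + Matrix.single r c 1 := by
  set p' := p + Matrix.single r c 1 - Matrix.single a b 1
  have hE : p' + Matrix.single a b 1 = p + Matrix.single r c 1 := by
    ext i j
    refine Nat.sub_add_cancel ?_
    by_cases h : a = i ∧ b = j
    · obtain ⟨rfl, rfl⟩ := h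
      simp [hab]
    · simp [Matrix.single_apply, h]
  have hrow (i : Fin n) : ∑ j, p' i j + (if a = i then 1 else 0) =
      ∑ j, p i j + if r = i then 1 else 0 := by
    have := congrArg (fun M => ∑ j, M i j) hE
    simp only [Matrix.add_apply, sum_add_distrib, Matrix.single_apply, ite_and] at this
    simpa using this
  have hcol (j : Fin n) : ∑ i, p' i j + (if b = j then 1 else 0) =
      ∑ i, p i j + if c = j then 1 else 0 := by
    have := congrArg (fun M => ∑ i, M i j) hE
    simp only [Matrix.add_apply, sum_add_distrib, Matrix.single_apply, ite_and] at this
    simpa using this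
  have htot : ∑ i, ∑ j, p' i j + 1 = ∑ i, ∑ j, p i j + 1 := by
    have := congrArg (fun M => ∑ i, ∑ j, M i j) hE
    simp only [Matrix.add_apply, sum_add_distrib, Matrix.single_apply, ite_and] at this
    simpa using this
  have hrow' (i : Fin n) : ∑ j, p' i j ≤ 1 := by
    have h := hrow i
    rcases eq_or_ne r i with rfl | hi
    · rw [if_pos rfl, hr] at h
      split_ifs at h <;> omega
    · rw [if_neg hi] at h
      have := hp.2.1 i
      split_ifs at h <;> omega
  have hcol' (j : Fin n) : ∑ i, p' i j ≤ 1 := by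
    have h := hcol j
    rcases eq_or_ne c j with rfl | hj
    · rcases hc with hc | rfl
      · rw [if_pos rfl, hc] at h
        split_ifs at h <;> omega
      · have := hp.2.2.1 b
        rw [if_pos rfl] at h
        omega
    · rw [if_neg hj] at h
      have := hp.2.2.1 j
      split_ifs at h <;> omega
  refine ⟨p', ⟨fun i => apply_le_one_of_row_sum_le_one (hrow' i), hrow', hcol', ?_⟩, hE⟩
  · have := hp.2.2.2
    omega

end IsNearPerfectMatching

theorem commonOnes_eq_sum_mul {p q : Matrix (Fin n) (Fin n) ℕ}
    (hp : ∀ i j, p i j ≤ 1) (hq : ∀ i j, q i j ≤ 1) :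
    commonOnes p q = ∑ i, ∑ j, p i j * q i j := by
  rw [commonOnes, card_filter, Fintype.sum_prod_type]
  refine sum_congr rfl fun i _ => sum_congr rfl fun j _ => ?_
  have := hp i j
  have := hq i j
  interval_cases p i j <;> interval_cases q i j <;> simp

theorem IsNearPerfectMatching.exists_apply_eq_one_and_eq_zero {p q : Matrix (Fin n) (Fin n) ℕ}
    (hp : IsNearPerfectMatching p) (hq : ∀ i j, q i j ≤ 1) (hl : commonOnes p q + 2 ≤ n) :
    ∃ a b, p a b = 1 ∧ q a b = 0 := by
  have hlt : ∑ i, ∑ j, p i j * q i j < ∑ i, ∑ j, p i j := by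
    rw [← commonOnes_eq_sum_mul hp.1 hq]
    have := hp.2.2.2
    omega
  obtain ⟨a, -, ha⟩ := exists_lt_of_sum_lt hlt
  obtain ⟨b, -, hb⟩ := exists_lt_of_sum_lt ha
  have := hp.1 a b
  have := hq a b
  refine ⟨a, b, ?_, ?_⟩ <;> interval_cases p a b <;> interval_cases q a b <;> simp_all

theorem IsNearPerfectMatching.exists_commonOnes_eq_succ {p q : Matrix (Fin n) (Fin n) ℕ}
    (hp : IsNearPerfectMatching p) (hq : IsPermMatrix q) (hl : commonOnes p q + 2 ≤ n) :
    ∃ r c p', q r c = 1 ∧ IsNearPerfectMatching p' ∧ commonOnes p' q = commonOnes p q + 1 ∧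
      ∀ i j, p' i j ≤ p i j + Matrix.single r c 1 i j := by
  obtain ⟨r, hr⟩ := hp.exists_row_sum_eq_zero
  obtain ⟨c, -, hc⟩ := exists_ne_zero_of_sum_ne_zero ((hq.2.1 r).trans_ne one_ne_zero)
  replace hc : q r c = 1 := le_antisymm (hq.1 r c) (Nat.one_le_iff_ne_zero.2 hc)
  have hprc : p r c = 0 := sum_eq_zero_iff.1 hr c (mem_univ c)
  obtain ⟨a, b, hab, hqab, hbc⟩ : ∃ a b, p a b = 1 ∧ q a b = 0 ∧ (∑ i, p i c = 0 ∨ b = c) := by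
    by_cases hcol : ∑ i, p i c = 0
    · obtain ⟨a, b, hab, hqab⟩ := hp.exists_apply_eq_one_and_eq_zero hq.1 hl
      exact ⟨a, b, hab, hqab, Or.inl hcol⟩
    · obtain ⟨a, -, ha⟩ := exists_ne_zero_of_sum_ne_zero hcol
      have har : a ≠ r := by rintro rfl; exact ha hprc
      exact ⟨a, c, le_antisymm (hp.1 a c) (Nat.one_le_iff_ne_zero.2 ha),
        hq.apply_eq_zero_of_ne hc har, Or.inr rfl⟩
  obtain ⟨p', hp', hE⟩ := hp.exists_add_single_eq hr hbc hab
  refine ⟨r, c, p', hc, hp', ?_, fun i j => ?_⟩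
  · have := congrArg (fun M => ∑ i, ∑ j, M i j * q i j) hE
    simp only [Matrix.add_apply, add_mul, sum_add_distrib, Matrix.single_apply, ite_and] at this
    rw [commonOnes_eq_sum_mul hp'.1 hq.1, commonOnes_eq_sum_mul hp.1 hq.1]
    simp [hqab, hc] at this
    omega
  · rw [← Matrix.add_apply, ← hE, Matrix.add_apply]
    exact Nat.le_add_right _ _

theorem exists_isPermMatrix_add_add_of_le {a b c P : Matrix (Fin n) (Fin n) ℕ}
    (ha : IsPermMatrix a) (hb : IsPermMatrix b) (hc : IsPermMatrix c)
    (hP : IsNearPerfectMatching P) (hPH : ∀ i j, P i j ≤ (a + b + c) i j) :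
    ∃ u v w, IsPermMatrix u ∧ IsPermMatrix v ∧ IsPermMatrix w ∧ a + b + c = u + v + w ∧
      ∀ i j, P i j ≤ (u + v) i j := by
  set H := a + b + c
  have hrow (i : Fin n) : ∑ j, H i j = 3 := by
    simp only [H, Matrix.add_apply, sum_add_distrib, ha.2.1, hb.2.1, hc.2.1]
  have hcol (j : Fin n) : ∑ i, H i j = 3 := by
    simp only [H, Matrix.add_apply, sum_add_distrib, ha.2.2, hb.2.2, hc.2.2]
  have hcolHP (j : Fin n) : ∑ i, (H - P) i j = 3 - ∑ i, P i j := by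
    simp only [Matrix.sub_apply]
    rw [sum_tsub_distrib _ fun i _ => hPH i j, hcol]
  obtain ⟨w, hw, hwle⟩ := exists_isPermMatrix_le_of_sum_lt (d := 2) (H - P)
    (fun i => by
      simp only [Matrix.sub_apply]
      rw [sum_tsub_distrib _ fun j _ => hPH i j, hrow]
      have := hP.2.1 i
      omega)
    (fun T => by
      rw [sum_congr rfl fun j _ => hcolHP j,
        sum_tsub_distrib _ fun j _ => (hP.2.2.1 j).trans (by norm_num), sum_const, smul_eq_mul]
      have := hP.card_le_sum_col_add_one T
      omega)
  have hwH (i j : Fin n) : w i j ≤ H i j := (hwle i j).trans (Nat.sub_le _ _)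
  obtain ⟨u, v, hu, hv, huv⟩ := exists_isPermMatrix_add_of_sum_eq_two (H - w)
    (fun i => by rw [hw.row_sum_tsub hwH, hrow]) (fun j => by rw [hw.col_sum_tsub hwH, hcol])
  refine ⟨u, v, w, hu, hv, hw, ?_, fun i j => ?_⟩
  · rw [← huv]
    ext i j
    simp [Nat.sub_add_cancel (hwH i j)]
  · have := hPH i j
    have := hwle i j
    rw [Matrix.sub_apply] at this
    rw [← huv, Matrix.sub_apply]
    omega

theorem exists_two_le_and_pos_add {k : ℕ} (hk : 3 ≤ k) (f : Fin k → ℕ) (hf : ∑ i, f i ≠ 0) :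
    ∃ j : Fin k, 2 ≤ (j : ℕ) ∧ 0 < f ⟨0, by omega⟩ + f ⟨1, by omega⟩ + f j := by
  obtain ⟨⟨i, hik⟩, -, hi⟩ := exists_ne_zero_of_sum_ne_zero hf
  by_cases h2 : 2 ≤ i
  · exact ⟨⟨i, hik⟩, h2, by omega⟩
  · refine ⟨⟨2, by omega⟩, le_rfl, ?_⟩
    interval_cases i <;> omega

/-- the exchange lemma for sums of permutation matrices
(Lemma about near perfect matchings). -/
theorem stmt16 (n k l : ℕ) (hk : 4 ≤ k) (hl : l + 2 ≤ n)
    (m q : Fin k → Matrix (Fin n) (Fin n) ℕ)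
    (hm : ∀ i, IsPermMatrix (m i)) (hq : ∀ i, IsPermMatrix (q i))
    (hsum : ∑ i, m i = ∑ i, q i)
    (p : Matrix (Fin n) (Fin n) ℕ) (hp : IsNearPerfectMatching p)
    (hple : ∀ i j, p i j ≤ (m ⟨0, by omega⟩ + m ⟨1, by omega⟩) i j)
    (hcommon : commonOnes p (q ⟨0, by omega⟩) = l) :
    ∃ jj : Fin k, 2 ≤ (jj : ℕ) ∧
      ∃ m1' m2' mj' p' : Matrix (Fin n) (Fin n) ℕ,
        IsPermMatrix m1' ∧ IsPermMatrix m2' ∧ IsPermMatrix mj' ∧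
        IsNearPerfectMatching p' ∧
        m ⟨0, by omega⟩ + m ⟨1, by omega⟩ + m jj = m1' + m2' + mj' ∧
        (∀ i j, p' i j ≤ (m1' + m2') i j) ∧
        commonOnes p' (q ⟨0, by omega⟩) = l + 1 := by
  obtain ⟨r, c, p', hqrc, hp', hcommon', hp'le⟩ :=
    hp.exists_commonOnes_eq_succ (hq _) (hcommon ▸ hl)
  have hmrc : ∑ i, m i r c ≠ 0 := by
    have hrc := congrFun (congrFun hsum r) c
    simp only [Matrix.sum_apply] at hrc
    rw [hrc, Ne, sum_eq_zero_iff]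
    intro h
    have := h _ (mem_univ ⟨0, by omega⟩)
    omega
  obtain ⟨jj, hjj, hjrc⟩ := exists_two_le_and_pos_add (by omega) (fun i => m i r c) hmrc
  have hp'H (i j : Fin n) : p' i j ≤ (m ⟨0, by omega⟩ + m ⟨1, by omega⟩ + m jj) i j := by
    by_cases hij : r = i ∧ c = j
    · obtain ⟨rfl, rfl⟩ := hij
      exact (hp'.1 r c).trans hjrc
    · have h₁ := hp'le i j
      have h₂ := hple i j
      simp only [Matrix.add_apply, Matrix.single_apply, hij, if_false] at h₁ h₂ ⊢
      omega
  obtain ⟨u, v, w, hu, hv, hw, hsum', hp'uv⟩ :=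
    exists_isPermMatrix_add_add_of_le (hm _) (hm _) (hm jj) hp' hp'H
  exact ⟨jj, hjj, u, v, w, p', hu, hv, hw, hp', hsum', hp'uv, hcommon ▸ hcommon'⟩
end
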